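/- arXiv:math/0411093 — 9 statements merged into one kernel-verified Lean document; each statement's English description precedes it below -/
import Mathlib

section
/- For a tetrahedron T = [A,B,C,D], let α, β, γ, δ be the perimeters of the facets opposite to A, B, C, D respectively, and let J = (αA + βB + γC + δD)/(α+β+γ+δ) be the complementary 1-centroid of T. Then the incenter of T coincides with J if and only if the inradii of the four triangular facets of T are all equal. -/
/-
Common geometric notions for simplices in Euclidean d-space, following
Edmonds–Hajja–Martini, "Coincidences of simplex centers and related facial
structures".  A d-simplex is given by its d+1 affinely independent vertices
`A : Fin (d+1) → EuclideanSpace ℝ (Fin d)`.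
-/

noncomputable section

abbrev Pt (d : ℕ) : Type := EuclideanSpace ℝ (Fin d)

variable {d : ℕ}

/-- The centroid of the simplex with vertices `A`: the average of the vertices. -/
def ctr (A : Fin (d+1) → Pt d) : Pt d := Finset.centroid ℝ Finset.univ A

/-- `C` is a circumcenter of the simplex with vertices `A`:
it is equidistant from all the vertices. -/
def IsCircumcenter (A : Fin (d+1) → Pt d) (C : Pt d) : Prop :=
  ∃ r : ℝ, ∀ i, dist C (A i) = r

/-- The affine span (hyperplane) of the facet opposite to vertex `j`. -/
def facetSpan (A : Fin (d+1) → Pt d) (j : Fin (d+1)) : Set (Pt d) :=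
  (affineSpan ℝ (A '' {i | i ≠ j}) : Set (Pt d))

/-- `I` is the incenter of the simplex with vertices `A`: an interior point
equidistant from the affine hyperplanes spanned by the facets. -/
def IsIncenter (A : Fin (d+1) → Pt d) (I : Pt d) : Prop :=
  I ∈ interior (convexHull ℝ (Set.range A)) ∧
    ∃ r : ℝ, ∀ j, Metric.infDist I (facetSpan A j) = r

/-- `F` is a Fermat-Torricelli point of the simplex with vertices `A`:
it minimizes the sum of the distances to the vertices. -/
def IsFermatPoint (A : Fin (d+1) → Pt d) (F : Pt d) : Prop :=
  ∀ Q : Pt d, ∑ i, dist F (A i) ≤ ∑ i, dist Q (A i)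

/-- The altitude of the simplex at vertex `j`: the distance from `A j` to the
affine span of the opposite facet. -/
def altitude (A : Fin (d+1) → Pt d) (j : Fin (d+1)) : ℝ :=
  Metric.infDist (A j) (facetSpan A j)

/-- Equiareal: all facets have the same `(d-1)`-dimensional volume; equivalently
(since `d · vol S = facet volume · altitude`), all altitudes are equal. -/
def Equiareal (A : Fin (d+1) → Pt d) : Prop :=
  ∀ j k, altitude A j = altitude A k

/-- `r` is the circumradius of the facet opposite `j`: some point of the affine
span of the facet is at distance `r` from all its vertices. -/
def IsFacetCircumradius (A : Fin (d+1) → Pt d) (j : Fin (d+1)) (r : ℝ) : Prop :=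
  ∃ C ∈ affineSpan ℝ (A '' {i | i ≠ j}), ∀ i, i ≠ j → dist C (A i) = r

/-- Equiradial: all facets have the same circumradius. -/
def Equiradial (A : Fin (d+1) → Pt d) : Prop :=
  ∃ r : ℝ, ∀ j, IsFacetCircumradius A j r

/-- Equifacetal: any two facets are congruent, i.e. there is an isometry of the
ambient space carrying the vertex set of one facet onto that of the other. -/
def Equifacetal (A : Fin (d+1) → Pt d) : Prop :=
  ∀ j k, ∃ f : Pt d ≃ᵢ Pt d, f '' (A '' {i | i ≠ j}) = A '' {i | i ≠ k}

/-- Regular: all edges have equal length. -/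
def Regular (A : Fin (d+1) → Pt d) : Prop :=
  ∀ i j k l, i ≠ j → k ≠ l → dist (A i) (A j) = dist (A k) (A l)

/-- Heron's formula: the area of a triangle with side lengths `x, y, z`. -/
def heronArea (x y z : ℝ) : ℝ :=
  Real.sqrt ((x + y + z) * (-x + y + z) * (x - y + z) * (x + y - z)) / 4

/-- The area of the triangular facet of a tetrahedron opposite vertex `j`. -/
def facetArea (A : Fin 4 → Pt 3) (j : Fin 4) : ℝ :=
  heronArea (dist (A (j.succAbove 0)) (A (j.succAbove 1)))
    (dist (A (j.succAbove 0)) (A (j.succAbove 2)))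
    (dist (A (j.succAbove 1)) (A (j.succAbove 2)))

/-- The perimeter of the triangular facet of a tetrahedron opposite vertex `j`. -/
def facetPerimeter (A : Fin 4 → Pt 3) (j : Fin 4) : ℝ :=
  dist (A (j.succAbove 0)) (A (j.succAbove 1)) +
  dist (A (j.succAbove 0)) (A (j.succAbove 2)) +
  dist (A (j.succAbove 1)) (A (j.succAbove 2))

/-- The inradius of the triangular facet opposite `j`: twice the area divided
by the perimeter. -/
def facetInradius (A : Fin 4 → Pt 3) (j : Fin 4) : ℝ :=
  2 * facetArea A j / facetPerimeter A j


/-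
The distance from a point with barycentric coordinates `w` to the facet opposite `A j` is
`|w j| * h j`, where `h j` is the altitude. For `J` the weights are `P j / ∑ P` with `P j` the
facet perimeters, and the facet inradius is `r j = 2 S j / P j` with `S j` the facet area, so the
distance from `J` to facet `j` is `2 S j h j / (r j ∑ P)`. As `S j h j` is three times the volume
of the tetrahedron for every `j` (both are read off the cross product of two edges of the facet),
the distances are all equal iff the inradii are; `J` is interior since its weights are positive.
-/

open Matrix EuclideanGeometry

namespace Affine.Simplex

variable {V P : Type*} [NormedAddCommGroup V] [InnerProductSpace ℝ V] [MetricSpace P]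
  [NormedAddTorsor V P] {n : ℕ} [NeZero n] (s : Simplex ℝ P n) (i : Fin (n + 1))

lemma infDist_affineSpan_image_compl_eq_abs_signedInfDist {p : P}
    (hp : p ∈ affineSpan ℝ (Set.range s.points)) :
    Metric.infDist p (affineSpan ℝ (s.points '' {i}ᶜ)) = |s.signedInfDist i p| := by
  rw [abs_signedInfDist_eq_dist_of_mem_affineSpan_range i hp, orthogonalProjectionSpan,
    dist_orthogonalProjection_eq_infDist, range_faceOpposite_points]

lemma infDist_points_affineSpan_image_compl :
    Metric.infDist (s.points i) (affineSpan ℝ (s.points '' {i}ᶜ)) = s.height i := by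
  rw [height, altitudeFoot, orthogonalProjectionSpan, dist_orthogonalProjection_eq_infDist,
    range_faceOpposite_points]

lemma infDist_affineCombination_affineSpan_image_compl {w : Fin (n + 1) → ℝ}
    (hw : ∑ j, w j = 1) :
    Metric.infDist (Finset.univ.affineCombination ℝ s.points w)
        (affineSpan ℝ (s.points '' {i}ᶜ)) = |w i| * s.height i := by
  rw [s.infDist_affineSpan_image_compl_eq_abs_signedInfDist i
      (affineCombination_mem_affineSpan hw s.points),
    signedInfDist_affineCombination _ _ hw, abs_mul, abs_norm, ← dist_eq_norm_vsub, height,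
    altitudeFoot]

end Affine.Simplex

lemma AffineIndependent.affineCombination_mem_interior_convexHull {ι E : Type*} [Fintype ι]
    [NormedAddCommGroup E] [NormedSpace ℝ E] [FiniteDimensional ℝ E] {A : ι → E}
    (hA : AffineIndependent ℝ A) (hcard : Fintype.card ι = Module.finrank ℝ E + 1)
    {w : ι → ℝ} (hw : ∑ i, w i = 1) (hpos : ∀ i, 0 < w i) :
    Finset.univ.affineCombination ℝ A w ∈ interior (convexHull ℝ (Set.range A)) := by
  let b : AffineBasis ι ℝ E := ⟨A, hA, hA.affineSpan_eq_top_iff_card_eq_finrank_add_one.2 hcard⟩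
  change Finset.univ.affineCombination ℝ b w ∈ interior (convexHull ℝ (Set.range b))
  rw [b.interior_convexHull]
  intro i
  rw [b.coord_apply_combination_of_mem (Finset.mem_univ i) hw]
  exact hpos i

lemma facetSpan_eq_affineSpan_image_compl (A : Fin (d + 1) → Pt d) (j : Fin (d + 1)) :
    facetSpan A j = affineSpan ℝ (A '' {j}ᶜ) := by
  rw [facetSpan, Set.compl_def]
  rfl

lemma facetSpan_eq_affineSpan_range (A : Fin (d + 1) → Pt d) (j : Fin (d + 1)) :
    facetSpan A j = affineSpan ℝ (Set.range (A ∘ j.succAbove)) := by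
  rw [facetSpan, Set.range_comp, Fin.range_succAbove]
  rfl

section Simplex

variable [NeZero d] {A : Fin (d + 1) → Pt d}

lemma altitude_eq_height (hA : AffineIndependent ℝ A) (j : Fin (d + 1)) :
    altitude A j = (⟨A, hA⟩ : Affine.Simplex ℝ (Pt d) d).height j := by
  rw [altitude, facetSpan_eq_affineSpan_image_compl]
  exact (Affine.Simplex.infDist_points_affineSpan_image_compl ⟨A, hA⟩ j :)

lemma altitude_pos (hA : AffineIndependent ℝ A) (j : Fin (d + 1)) : 0 < altitude A j :=
  altitude_eq_height hA j ▸ Affine.Simplex.height_pos _ j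

lemma infDist_affineCombination_facetSpan (hA : AffineIndependent ℝ A) {w : Fin (d + 1) → ℝ}
    (hw : ∑ i, w i = 1) (j : Fin (d + 1)) :
    Metric.infDist (Finset.univ.affineCombination ℝ A w) (facetSpan A j) =
      |w j| * altitude A j := by
  rw [altitude_eq_height hA, facetSpan_eq_affineSpan_image_compl]
  exact Affine.Simplex.infDist_affineCombination_affineSpan_image_compl ⟨A, hA⟩ j hw

end Simplex

lemma EuclideanSpace.real_inner_eq_dotProduct {ι : Type*} [Fintype ι]
    (x y : EuclideanSpace ℝ ι) : inner ℝ x y = x.ofLp ⬝ᵥ y.ofLp := by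
  rw [EuclideanSpace.inner_eq_star_dotProduct, star_trivial, dotProduct_comm]

section Triangle

def triangleNormal (p : Fin 3 → Pt 3) : Pt 3 :=
  WithLp.toLp 2 ((p 1 - p 0).ofLp ⨯₃ (p 2 - p 0).ofLp)

lemma inner_vsub_triangleNormal (p : Fin 3 → Pt 3) (i : Fin 3) :
    inner ℝ (p i -ᵥ p 0) (triangleNormal p) = 0 := by
  rw [vsub_eq_sub, EuclideanSpace.real_inner_eq_dotProduct, triangleNormal]
  fin_cases i
  · simp
  · exact dot_self_cross _ _
  · exact dot_cross_self _ _

lemma triangleNormal_ne_zero {p : Fin 3 → Pt 3} (hp : AffineIndependent ℝ p) :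
    triangleNormal p ≠ 0 := by
  rw [affineIndependent_iff_linearIndependent_vsub ℝ p 0] at hp
  have hsides : LinearIndependent ℝ ![p 1 - p 0, p 2 - p 0] := by
    have e : ![p 1 - p 0, p 2 - p 0] =
        (fun i : {x // x ≠ (0 : Fin 3)} => p i -ᵥ p 0) ∘ fun i => ⟨i.succ, i.succ_ne_zero⟩ := by
      ext i : 1; fin_cases i <;> rfl
    rw [e]
    exact hp.comp _ fun i j h => Fin.succ_injective _ (congrArg Subtype.val h)
  have e : ![(p 1 - p 0).ofLp, (p 2 - p 0).ofLp] =
      WithLp.linearEquiv 2 ℝ (Fin 3 → ℝ) ∘ ![p 1 - p 0, p 2 - p 0] := by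
    ext i : 1; fin_cases i <;> rfl
  rw [triangleNormal, Ne, WithLp.toLp_eq_zero, ← Ne,
    crossProduct_ne_zero_iff_linearIndependent, e]
  exact hsides.map' _ (LinearEquiv.ker _)

lemma orthogonal_direction_affineSpan_triangle {p : Fin 3 → Pt 3}
    (hp : AffineIndependent ℝ p) :
    (affineSpan ℝ (Set.range p)).directionᗮ = ℝ ∙ triangleNormal p := by
  have hle : ℝ ∙ triangleNormal p ≤ (affineSpan ℝ (Set.range p)).directionᗮ := by
    rw [← Submodule.isOrtho_iff_le, Submodule.isOrtho_comm, Submodule.isOrtho_iff_le,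
      direction_affineSpan, vectorSpan_range_eq_span_range_vsub_right ℝ p 0, Submodule.span_le]
    rintro _ ⟨i, rfl⟩
    exact Submodule.mem_orthogonal_singleton_iff_inner_left.2 (inner_vsub_triangleNormal p i)
  refine (Submodule.eq_of_le_of_finrank_eq hle ?_).symm
  have hsum := (affineSpan ℝ (Set.range p)).direction.finrank_add_finrank_orthogonal
  rw [direction_affineSpan, hp.finrank_vectorSpan (n := 2) rfl, finrank_euclideanSpace_fin]
    at hsum
  rw [finrank_span_singleton (triangleNormal_ne_zero hp), direction_affineSpan]
  omega

lemma infDist_affineSpan_triangle {p : Fin 3 → Pt 3} (hp : AffineIndependent ℝ p) (x : Pt 3) :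
    Metric.infDist x (affineSpan ℝ (Set.range p)) =
      |inner ℝ (x -ᵥ p 0) (triangleNormal p)| / ‖triangleNormal p‖ := by
  have hn : ‖triangleNormal p‖ ≠ 0 := norm_ne_zero_iff.2 (triangleNormal_ne_zero hp)
  have hS := orthogonal_direction_affineSpan_triangle hp
  set n := triangleNormal p
  set t := inner ℝ (x -ᵥ p 0) n / ‖n‖ ^ 2 with ht
  have hproj : orthogonalProjection (affineSpan ℝ (Set.range p)) x = (-t) • n +ᵥ x := by
    rw [coe_orthogonalProjection_eq_iff_mem, hS]
    constructor
    · rw [← vsub_vadd ((-t) • n +ᵥ x) (p 0)]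
      refine AffineSubspace.vadd_mem_of_mem_direction ?_
        (mem_affineSpan ℝ (Set.mem_range_self 0))
      rw [← Submodule.orthogonal_orthogonal (affineSpan ℝ (Set.range p)).direction, hS,
        Submodule.mem_orthogonal_singleton_iff_inner_right, vadd_vsub_assoc, inner_add_right,
        inner_smul_right, real_inner_self_eq_norm_sq, real_inner_comm, ht]
      field_simp
      ring
    · rw [vsub_vadd_eq_vsub_sub, vsub_self, zero_sub, ← neg_smul, neg_neg]
      exact Submodule.smul_mem _ _ (Submodule.mem_span_singleton_self n)
  rw [← dist_orthogonalProjection_eq_infDist, hproj, dist_vadd_right, norm_smul, norm_neg,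
    Real.norm_eq_abs, abs_div, abs_of_nonneg (sq_nonneg ‖n‖)]
  field_simp

lemma norm_triangleNormal_sq (p : Fin 3 → Pt 3) :
    ‖triangleNormal p‖ ^ 2 =
      ‖p 1 - p 0‖ ^ 2 * ‖p 2 - p 0‖ ^ 2 - inner ℝ (p 1 - p 0) (p 2 - p 0) ^ 2 := by
  simp only [← real_inner_self_eq_norm_sq, EuclideanSpace.real_inner_eq_dotProduct,
    triangleNormal, cross_dot_cross]
  rw [dotProduct_comm (p 2 - p 0).ofLp (p 1 - p 0).ofLp]
  ring

lemma heronArea_dist_eq (p : Fin 3 → Pt 3) :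
    heronArea (dist (p 0) (p 1)) (dist (p 0) (p 2)) (dist (p 1) (p 2)) =
      ‖triangleNormal p‖ / 2 := by
  have hc : dist (p 1) (p 2) = ‖(p 2 - p 0) - (p 1 - p 0)‖ := by
    rw [dist_comm, dist_eq_norm, sub_sub_sub_cancel_right]
  have hc2 := norm_sub_sq_real (p 2 - p 0) (p 1 - p 0)
  have hprod : (dist (p 0) (p 1) + dist (p 0) (p 2) + dist (p 1) (p 2)) *
      (-dist (p 0) (p 1) + dist (p 0) (p 2) + dist (p 1) (p 2)) *
      (dist (p 0) (p 1) - dist (p 0) (p 2) + dist (p 1) (p 2)) *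
      (dist (p 0) (p 1) + dist (p 0) (p 2) - dist (p 1) (p 2)) =
        (2 * ‖triangleNormal p‖) ^ 2 := by
    rw [dist_comm (p 0), dist_comm (p 0), dist_eq_norm, dist_eq_norm, hc, mul_pow,
      norm_triangleNormal_sq, real_inner_comm]
    linear_combination (‖p 1 - p 0‖ ^ 2 + ‖p 2 - p 0‖ ^ 2 +
      2 * inner ℝ (p 2 - p 0) (p 1 - p 0) - ‖p 2 - p 0 - (p 1 - p 0)‖ ^ 2) * hc2
  rw [heronArea, hprod, Real.sqrt_sq (by positivity)]
  ring

end Triangle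

section Tetrahedron

variable {A : Fin 4 → Pt 3}

lemma facetArea_eq_norm_triangleNormal (A : Fin 4 → Pt 3) (j : Fin 4) :
    facetArea A j = ‖triangleNormal (A ∘ j.succAbove)‖ / 2 :=
  heronArea_dist_eq (A ∘ j.succAbove)

lemma facetArea_pos (hA : AffineIndependent ℝ A) (j : Fin 4) : 0 < facetArea A j := by
  rw [facetArea_eq_norm_triangleNormal]
  have := triangleNormal_ne_zero (hA.comp_embedding j.succAboveEmb)
  positivity

lemma altitude_eq_abs_inner_triangleNormal (hA : AffineIndependent ℝ A) (j : Fin 4) :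
    altitude A j = |inner ℝ (A j -ᵥ A (j.succAbove 0)) (triangleNormal (A ∘ j.succAbove))| /
      ‖triangleNormal (A ∘ j.succAbove)‖ := by
  rw [altitude, facetSpan_eq_affineSpan_range]
  exact infDist_affineSpan_triangle (hA.comp_embedding j.succAboveEmb) (A j)

lemma inner_vsub_triangleNormal_succAbove (A : Fin 4 → Pt 3) (j : Fin 4) :
    inner ℝ (A j -ᵥ A (j.succAbove 0)) (triangleNormal (A ∘ j.succAbove)) =
      (-1) ^ (j : ℕ) * inner ℝ (A 0 -ᵥ A 1) (triangleNormal (A ∘ Fin.succAbove 0)) := by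
  simp only [EuclideanSpace.real_inner_eq_dotProduct, triangleNormal, vsub_eq_sub,
    Function.comp_apply, WithLp.ofLp_sub, cross_apply, dotProduct, Fin.sum_univ_three]
  fin_cases j <;> simp [Fin.succAbove] <;> ring

lemma facetArea_mul_altitude (hA : AffineIndependent ℝ A) (j : Fin 4) :
    facetArea A j * altitude A j =
      |inner ℝ (A 0 -ᵥ A 1) (triangleNormal (A ∘ Fin.succAbove 0))| / 2 := by
  rw [facetArea_eq_norm_triangleNormal, altitude_eq_abs_inner_triangleNormal hA,
    inner_vsub_triangleNormal_succAbove, abs_mul, abs_pow, abs_neg, abs_one, one_pow, one_mul]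
  have : ‖triangleNormal (A ∘ j.succAbove)‖ ≠ 0 :=
    norm_ne_zero_iff.2 (triangleNormal_ne_zero (hA.comp_embedding j.succAboveEmb))
  field_simp

lemma facetPerimeter_pos (hA : AffineIndependent ℝ A) (j : Fin 4) : 0 < facetPerimeter A j := by
  have h : 0 < dist (A (j.succAbove 0)) (A (j.succAbove 1)) :=
    dist_pos.2 fun h => absurd (Fin.succAbove_right_injective (hA.injective h)) (by decide)
  unfold facetPerimeter
  positivity

lemma infDist_affineCombination_facetSpan_mul_facetInradius (hA : AffineIndependent ℝ A)
    {w : Fin 4 → ℝ} (hw : ∑ i, w i = 1) (j : Fin 4) :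
    Metric.infDist (Finset.univ.affineCombination ℝ A w) (facetSpan A j) * facetInradius A j =
      |w j| / facetPerimeter A j *
        |inner ℝ (A 0 -ᵥ A 1) (triangleNormal (A ∘ Fin.succAbove 0))| := by
  have hvol := facetArea_mul_altitude hA j
  have := (facetPerimeter_pos hA j).ne'
  rw [infDist_affineCombination_facetSpan hA hw, facetInradius]
  field_simp
  linear_combination 2 * |w j| * hvol

end Tetrahedron

lemma exists_forall_eq_iff_forall_eq_of_mul_eq_const {ι : Type*} [Nonempty ι] {f g : ι → ℝ}
    {c : ℝ} (hc : c ≠ 0) (hfg : ∀ i, f i * g i = c) :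
    (∃ r, ∀ i, f i = r) ↔ ∀ i j, g i = g j := by
  have hf : ∀ i, f i ≠ 0 := fun i h => hc (by rw [← hfg i, h, zero_mul])
  constructor
  · rintro ⟨r, hr⟩ i j
    have := (hfg i).trans (hfg j).symm
    rw [hr i, hr j] at this
    exact mul_left_cancel₀ (hr i ▸ hf i) this
  · intro hg
    obtain ⟨i₀⟩ := ‹Nonempty ι›
    refine ⟨f i₀, fun i => ?_⟩
    have hg₀ : g i₀ ≠ 0 := fun h => hc (by rw [← hfg i₀, h, mul_zero])
    have := (hfg i).trans (hfg i₀).symm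
    rw [hg i i₀] at this
    exact mul_right_cancel₀ hg₀ this

/-- Theorem 2.3. For a tetrahedron `T = [A 0, A 1, A 2, A 3]`
with `J` the complementary 1-centroid (the average of the vertices weighted by
the perimeters of the opposite facets), the incenter of `T` coincides with `J`
iff the inradii of the four triangular facets are all equal. -/
theorem statement2 (A : Fin 4 → Pt 3) (hA : AffineIndependent ℝ A)
    (J : Pt 3)
    (hJ : J = (facetPerimeter A 0 + facetPerimeter A 1 +
        facetPerimeter A 2 + facetPerimeter A 3)⁻¹ •
        (facetPerimeter A 0 • A 0 + facetPerimeter A 1 • A 1 +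
          facetPerimeter A 2 • A 2 + facetPerimeter A 3 • A 3)) :
    IsIncenter A J ↔ ∀ j k, facetInradius A j = facetInradius A k := by
  set σ := ∑ i, facetPerimeter A i
  have hσ : 0 < σ := Finset.sum_pos (fun i _ => facetPerimeter_pos hA i) Finset.univ_nonempty
  set w : Fin 4 → ℝ := fun i => facetPerimeter A i / σ
  have hw : ∑ i, w i = 1 := by rw [← Finset.sum_div, div_self hσ.ne']
  have hw_pos : ∀ i, 0 < w i := fun i => div_pos (facetPerimeter_pos hA i) hσ
  have hJw : J = Finset.univ.affineCombination ℝ A w := by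
    rw [Finset.univ.affineCombination_eq_linear_combination _ _ hw, hJ]
    simp only [w, σ, Fin.sum_univ_four, smul_add, smul_smul, div_eq_inv_mul]
  set V := |inner ℝ (A 0 -ᵥ A 1) (triangleNormal (A ∘ Fin.succAbove 0))|
  have hV : 0 < V := by
    have h := mul_pos (facetArea_pos hA 0) (altitude_pos hA 0)
    rw [facetArea_mul_altitude hA 0] at h
    linarith
  have hdist : ∀ j, Metric.infDist J (facetSpan A j) * facetInradius A j = V / σ := by
    intro j
    rw [hJw, infDist_affineCombination_facetSpan_mul_facetInradius hA hw, abs_of_pos (hw_pos j),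
      div_div_cancel_left' (facetPerimeter_pos hA j).ne', inv_mul_eq_div]
  rw [IsIncenter, and_iff_right (hJw ▸ hA.affineCombination_mem_interior_convexHull
    (by simp) hw hw_pos)]
  exact exists_forall_eq_iff_forall_eq_of_mul_eq_const (div_pos hV hσ).ne' hdist
end
end

section
/- Let S be a d-simplex in Euclidean d-space (d ≥ 2). If any two of the centroid, the circumcenter, and the Fermat-Torricelli point of S coincide, then all three coincide. -/
/-
Common geometric notions for simplices in Euclidean d-space, following
Edmonds–Hajja–Martini, "Coincidences of simplex centers and related facial
structures".  A d-simplex is given by its d+1 affinely independent vertices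
`A : Fin (d+1) → EuclideanSpace ℝ (Fin d)`.
-/

noncomputable section

variable {d : ℕ}

/-!
At a point `P` consider three conditions: `∑ (A i - P) = 0` (`P` is the centroid), `dist P (A i)`
is constant (`P` is the circumcenter), and `∑ (dist P (A i))⁻¹ • (A i - P) = 0`, the first-order
condition at a Fermat-Torricelli point that is not a vertex. By affine independence, once
`∑ (A i - P) = 0` every linear relation among the `A i - P` has constant coefficients, so the
first and third conditions give the second, and the second and third give the first. If the
centroid is the circumcenter, Cauchy–Schwarz against the unit vectors `(P - A i) / r` shows that it
minimizes the sum of distances, and this minimizer is unique because the vertices are not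
collinear and the Euclidean norm is strictly convex.
-/

open scoped RealInnerProductSpace

section AffineIndependent

variable {k V ι : Type*} [Field k] [CharZero k] [AddCommGroup V] [Module k V] [Fintype ι]

theorem Finset.univ_centroid_eq_iff_sum_sub_eq_zero [Nonempty ι] {p : ι → V} {q : V} :
    Finset.univ.centroid k p = q ↔ ∑ i, (p i - q) = 0 := by
  have hcard : (Fintype.card ι : k) ≠ 0 := Nat.cast_ne_zero.2 Fintype.card_ne_zero
  rw [Finset.centroid_def, Finset.affineCombination_eq_linear_combination _ _ _
    (Finset.sum_centroidWeights_eq_one_of_nonempty k _ Finset.univ_nonempty)]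
  simp only [Finset.centroidWeights_apply, Finset.card_univ, ← Finset.smul_sum,
    Finset.sum_sub_distrib, Finset.sum_const, ← Nat.cast_smul_eq_nsmul k, sub_eq_zero]
  rw [inv_smul_eq_iff₀ hcard]

theorem AffineIndependent.eq_of_sum_smul_sub_eq_zero {p : ι → V} (hp : AffineIndependent k p)
    {q : V} (hq : ∑ i, (p i - q) = 0) {a : ι → k} (ha : ∑ i, a i • (p i - q) = 0) (i j : ι) :
    a i = a j := by
  have : Nonempty ι := ⟨i⟩
  have hcard : (Fintype.card ι : k) ≠ 0 := Nat.cast_ne_zero.2 Fintype.card_ne_zero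
  set c := (∑ i, a i) / Fintype.card ι
  have hsum : ∑ i, p i = (Fintype.card ι : k) • q := by
    rw [Finset.sum_sub_distrib, sub_eq_zero] at hq
    rw [hq, Finset.sum_const, Finset.card_univ, Nat.cast_smul_eq_nsmul]
  have ha' : ∑ i, a i • p i = (∑ i, a i) • q := by
    simpa only [smul_sub, Finset.sum_sub_distrib, sub_eq_zero, ← Finset.sum_smul] using ha
  have hconst : ∀ l, a l = c := fun l =>
    hp.eq_of_sum_eq_sum (s := Finset.univ) (w₂ := fun _ => c)
      (by simp [c, mul_div_cancel₀ _ hcard])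
      (by rw [ha', ← Finset.smul_sum, hsum, smul_smul]; simp [c, hcard]) l (Finset.mem_univ l)
  rw [hconst i, hconst j]

theorem AffineIndependent.univ_centroid_ne {p : ι → V} (hp : AffineIndependent k p)
    (hcard : 1 < Fintype.card ι) (j : ι) : Finset.univ.centroid k p ≠ p j := by
  classical
  have : Nonempty ι := ⟨j⟩
  intro h
  obtain ⟨i, hij⟩ := Fintype.exists_ne_of_one_lt_card hcard j
  have hrel : ∑ l, (Pi.single j 1 : ι → k) l • (p l - p j) = 0 := by simp
  have hconst := hp.eq_of_sum_smul_sub_eq_zero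
    (Finset.univ_centroid_eq_iff_sum_sub_eq_zero.1 h) hrel i j
  simp [hij] at hconst

end AffineIndependent

theorem AffineIndependent.not_collinear {k V P ι : Type*} [DivisionRing k] [AddCommGroup V]
    [Module k V] [AddTorsor V P] [Fintype ι] {p : ι → P} (hp : AffineIndependent k p)
    (hcard : 3 ≤ Fintype.card ι) : ¬Collinear k (Set.range p) := by
  intro hcol
  obtain ⟨n, hn⟩ : ∃ n, Fintype.card ι = n + 1 := ⟨_, (Nat.succ_pred_eq_of_pos (by omega)).symm⟩
  have := hcol.finiteDimensional_vectorSpan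
  have hrank := collinear_iff_finrank_le_one.1 hcol
  rw [hp.finrank_vectorSpan hn] at hrank
  omega

theorem AffineIndependent.eq_of_forall_dist_eq {V P : Type*} [NormedAddCommGroup V]
    [InnerProductSpace ℝ V] [FiniteDimensional ℝ V] [MetricSpace P] [NormedAddTorsor V P] {n : ℕ}
    (hn : Module.finrank ℝ V = n) {p : Fin (n + 1) → P} (hp : AffineIndependent ℝ p)
    {c c' : P} {r r' : ℝ} (hc : ∀ i, dist c (p i) = r) (hc' : ∀ i, dist c' (p i) = r') :
    c = c' := by
  let S : Affine.Simplex ℝ P n := ⟨p, hp⟩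
  have hspan : affineSpan ℝ (Set.range S.points) = ⊤ :=
    hp.affineSpan_eq_top_iff_card_eq_finrank_add_one.2 (by simp [hn])
  have hcirc : ∀ {x : P} {ρ : ℝ}, (∀ i, dist x (p i) = ρ) → x = S.circumcenter := fun hx =>
    S.eq_circumcenter_of_dist_eq (hspan ▸ AffineSubspace.mem_top _ _ _)
      fun i => (dist_comm _ _).trans (hx i)
  rw [hcirc hc, hcirc hc']

section SumDist

variable {V ι : Type*} [NormedAddCommGroup V] [InnerProductSpace ℝ V] [Fintype ι]

theorem hasFDerivAt_dist_const {x p : V} (h : x ≠ p) :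
    HasFDerivAt (fun y => dist y p) ((dist x p)⁻¹ • innerSL ℝ (x - p)) x := by
  have hsq : HasFDerivAt (fun y => ‖y - p‖ ^ 2) (2 • innerSL ℝ (x - p)) x := by
    simpa using ((hasFDerivAt_id x).sub_const p).norm_sq
  have hx : ‖x - p‖ ^ 2 ≠ 0 := by simpa [sub_eq_zero] using h
  convert hsq.sqrt hx using 1
  · ext y; simp [dist_eq_norm, Real.sqrt_sq (norm_nonneg _)]
  · ext v
    simp only [dist_eq_norm, map_sub, smul_apply, sub_apply, coe_innerSL_apply, smul_eq_mul,
      Real.sqrt_sq (norm_nonneg _), one_div, mul_inv_rev, nsmul_eq_mul, Nat.cast_ofNat]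
    field_simp

theorem sum_inv_dist_smul_sub_eq_zero {p : ι → V} {F : V}
    (hF : ∀ Q, ∑ i, dist F (p i) ≤ ∑ i, dist Q (p i)) (hne : ∀ i, F ≠ p i) :
    ∑ i, (dist F (p i))⁻¹ • (p i - F) = 0 := by
  set g := ∑ i, (dist F (p i))⁻¹ • (F - p i)
  have hderiv : HasFDerivAt (fun y => ∑ i, dist y (p i))
      (∑ i, (dist F (p i))⁻¹ • innerSL ℝ (F - p i)) F :=
    HasFDerivAt.fun_sum fun i _ => hasFDerivAt_dist_const (hne i)
  have hmin : IsLocalMin (fun y => ∑ i, dist y (p i)) F := Filter.Eventually.of_forall hF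
  have hg := congrArg (· g) (hmin.hasFDerivAt_eq_zero hderiv)
  simp only [FunLike.coe_sum, FunLike.coe_smul, Finset.sum_apply, Pi.smul_apply,
    innerSL_apply_apply, zero_apply] at hg
  have hg0 : g = 0 := by
    rw [← inner_self_eq_zero (𝕜 := ℝ), ← hg]
    simp only [g, sum_inner, real_inner_smul_left, smul_eq_mul]
  rw [← neg_eq_zero, ← hg0, ← Finset.sum_neg_distrib]
  simp only [← smul_neg, neg_sub, g]

theorem sum_dist_le_sum_dist_of_sum_sub_eq_zero {p : ι → V} {C : V} {r : ℝ}
    (hr : ∀ i, dist C (p i) = r) (hC : ∑ i, (p i - C) = 0) (Q : V) :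
    ∑ i, dist C (p i) ≤ ∑ i, dist Q (p i) := by
  simp only [hr, Finset.sum_const, Finset.card_univ, nsmul_eq_mul]
  rcases le_or_gt r 0 with hr0 | hr0
  · exact (mul_nonpos_of_nonneg_of_nonpos (Nat.cast_nonneg _) hr0).trans
      (Finset.sum_nonneg fun i _ => dist_nonneg)
  have hinner : ∑ i, ⟪Q - p i, C - p i⟫ = ∑ i, ‖C - p i‖ ^ 2 := by
    have hsplit : ∀ i, ⟪Q - p i, C - p i⟫ = ⟪Q - C, C - p i⟫ + ‖C - p i‖ ^ 2 := fun i => by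
      rw [← real_inner_self_eq_norm_sq, ← inner_add_left, sub_add_sub_cancel]
    have hC' : ∑ i, (C - p i) = 0 := by
      rw [← neg_eq_zero, ← Finset.sum_neg_distrib]; simpa using hC
    rw [Finset.sum_congr rfl fun i _ => hsplit i, Finset.sum_add_distrib, ← inner_sum, hC',
      inner_zero_right, zero_add]
  refine le_of_mul_le_mul_left ?_ hr0
  calc r * (Fintype.card ι * r) = ∑ i, ‖C - p i‖ ^ 2 := by
        simp only [← dist_eq_norm, hr, sq, Finset.sum_const, Finset.card_univ, nsmul_eq_mul]
        ring
    _ = ∑ i, ⟪Q - p i, C - p i⟫ := hinner.symm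
    _ ≤ ∑ i, ‖Q - p i‖ * ‖C - p i‖ := Finset.sum_le_sum fun i _ => real_inner_le_norm _ _
    _ = r * ∑ i, dist Q (p i) := by simp [← dist_eq_norm, hr, Finset.mul_sum, mul_comm]

theorem mem_affineSpan_pair_of_sameRay {x y p : V} (hxy : x ≠ y)
    (h : SameRay ℝ (x - p) (y - p)) : p ∈ line[ℝ, x, y] := by
  have hc : Collinear ℝ {p, x, y} := by
    rcases wbtw_total_of_sameRay_vsub_left (x := p) h with h | h
    · exact h.collinear
    · rw [Set.pair_comm]; exact h.collinear
  exact hc.mem_affineSpan_of_mem_of_ne (by simp) (by simp) (by simp) hxy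

/-- The midpoint of two minimizers is a minimizer, which forces equality in the triangle
inequality `dist m (p i) ≤ (dist F (p i) + dist F' (p i)) / 2` for every `i`. -/
theorem eq_of_forall_sum_dist_le {p : ι → V} (hp : ¬Collinear ℝ (Set.range p)) {F F' : V}
    (hF : ∀ Q, ∑ i, dist F (p i) ≤ ∑ i, dist Q (p i))
    (hF' : ∀ Q, ∑ i, dist F' (p i) ≤ ∑ i, dist Q (p i)) : F = F' := by
  by_contra hne
  set m : V := (2 : ℝ)⁻¹ • (F + F')
  have hmid : ∀ i, ‖(F - p i) + (F' - p i)‖ = 2 * dist m (p i) := fun i => by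
    rw [dist_eq_norm, ← Real.norm_two, ← norm_smul]
    congr 1
    module
  have hle : ∀ i ∈ Finset.univ, ‖(F - p i) + (F' - p i)‖ ≤ ‖F - p i‖ + ‖F' - p i‖ :=
    fun i _ => norm_add_le _ _
  have hsum : ∑ i, (‖F - p i‖ + ‖F' - p i‖) ≤ ∑ i, ‖(F - p i) + (F' - p i)‖ := by
    simp only [Finset.sum_add_distrib, hmid, ← Finset.mul_sum, ← dist_eq_norm]
    linarith [hF m, hF' m]
  have hsame : ∀ i, SameRay ℝ (F - p i) (F' - p i) := fun i =>
    sameRay_iff_norm_add.2 (((Finset.sum_eq_sum_iff_of_le hle).1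
      (le_antisymm (Finset.sum_le_sum hle) hsum)) i (Finset.mem_univ i))
  refine hp ((collinear_iff_exists_forall_eq_smul_vadd _).2 ⟨F, F' - F, ?_⟩)
  rintro _ ⟨i, rfl⟩
  obtain ⟨t, ht⟩ :=
    mem_affineSpan_pair_iff_exists_lineMap_eq.1 (mem_affineSpan_pair_of_sameRay hne (hsame i))
  exact ⟨t, by rw [← ht, AffineMap.lineMap_apply]; rfl⟩

end SumDist

section Simplex

variable {A : Fin (d + 1) → Pt d} {C F : Pt d}

theorem ctr_eq_iff {P : Pt d} : ctr A = P ↔ ∑ i, (A i - P) = 0 :=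
  Finset.univ_centroid_eq_iff_sum_sub_eq_zero

theorem circumcenter_eq_fermatPoint_of_ctr_eq (hd : 2 ≤ d) (hA : AffineIndependent ℝ A)
    (hC : IsCircumcenter A C) (hF : IsFermatPoint A F) (h : ctr A = C) : C = F := by
  obtain ⟨r, hr⟩ := hC
  exact eq_of_forall_sum_dist_le (hA.not_collinear (by simp; omega))
    (sum_dist_le_sum_dist_of_sum_sub_eq_zero hr (ctr_eq_iff.1 h)) hF

theorem ctr_eq_circumcenter_of_ctr_eq_fermatPoint (hd : 1 ≤ d) (hA : AffineIndependent ℝ A)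
    (hC : IsCircumcenter A C) (hF : IsFermatPoint A F) (h : ctr A = F) : ctr A = C := by
  obtain ⟨r, hr⟩ := hC
  have hne : ∀ i, F ≠ A i := fun i => h ▸ hA.univ_centroid_ne (by simp; omega) i
  have hdist : ∀ i, dist F (A i) = dist F (A 0) := fun i =>
    inv_injective (hA.eq_of_sum_smul_sub_eq_zero (ctr_eq_iff.1 h)
      (sum_inv_dist_smul_sub_eq_zero hF hne) i 0)
  rw [h]
  exact hA.eq_of_forall_dist_eq finrank_euclideanSpace_fin hdist hr

theorem ctr_eq_circumcenter_of_circumcenter_eq_fermatPoint (hd : 1 ≤ d)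
    (hA : AffineIndependent ℝ A) (hC : IsCircumcenter A C) (hF : IsFermatPoint A F)
    (h : C = F) : ctr A = C := by
  subst h
  obtain ⟨r, hr⟩ := hC
  have hr0 : r ≠ 0 := by
    rintro rfl
    obtain ⟨j, hj⟩ := Fintype.exists_ne_of_one_lt_card (by simp; omega) (0 : Fin (d + 1))
    exact hj (hA.injective ((dist_eq_zero.1 (hr j)).symm.trans (dist_eq_zero.1 (hr 0))))
  have hgrad := sum_inv_dist_smul_sub_eq_zero hF fun i h => hr0 (by rw [← hr i, h, dist_self])
  simp only [hr, ← Finset.smul_sum] at hgrad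
  exact ctr_eq_iff.2 ((smul_eq_zero.1 hgrad).resolve_left (inv_ne_zero hr0))

end Simplex

/-- Theorem 3.1. Let `S` be a `d`-simplex (`d ≥ 2`) with
circumcenter `C` and Fermat-Torricelli point `F`.  If any two of the centroid,
the circumcenter and the Fermat-Torricelli point coincide, then all three
coincide. -/
theorem statement3 (d : ℕ) (hd : 2 ≤ d)
    (A : Fin (d+1) → Pt d) (hA : AffineIndependent ℝ A)
    (C F : Pt d) (hC : IsCircumcenter A C) (hF : IsFermatPoint A F)
    (h2 : ctr A = C ∨ ctr A = F ∨ C = F) :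
    ctr A = C ∧ C = F := by
  rcases h2 with h | h | h
  · exact ⟨h, circumcenter_eq_fermatPoint_of_ctr_eq hd hA hC hF h⟩
  · have hGC := ctr_eq_circumcenter_of_ctr_eq_fermatPoint (by omega) hA hC hF h
    exact ⟨hGC, hGC.symm.trans h⟩
  · exact ⟨ctr_eq_circumcenter_of_circumcenter_eq_fermatPoint (by omega) hA hC hF h, h⟩
end
end

section
/- For a d-simplex S in Euclidean d-space, the centroid of S coincides with the circumcenter of S if and only if S has well-distributed edge lengths, i.e., all facets of S have the same sum of squares of their edge lengths. -/
/-
Common geometric notions for simplices in Euclidean d-space, following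
Edmonds–Hajja–Martini, "Coincidences of simplex centers and related facial
structures".  A d-simplex is given by its d+1 affinely independent vertices
`A : Fin (d+1) → EuclideanSpace ℝ (Fin d)`.
-/

noncomputable section

variable {d : ℕ}

/-- The sum of the squares of the edge lengths of the facet opposite `j`. -/
def facetEdgeSqSum (A : Fin (d+1) → Pt d) (j : Fin (d+1)) : ℝ :=
  ∑ p ∈ Finset.univ.filter
      (fun p : Fin (d+1) × Fin (d+1) => p.1 < p.2 ∧ p.1 ≠ j ∧ p.2 ≠ j),
    dist (A p.1) (A p.2) ^ 2

/-- Well-distributed edge lengths: all facets have the same sum of squares of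
their edge lengths. -/
def WellDistributed (A : Fin (d+1) → Pt d) : Prop :=
  ∀ j k, facetEdgeSqSum A j = facetEdgeSqSum A k


open RealInnerProductSpace in
private lemma pair_double_aux {n : ℕ} (s : Finset (Fin n)) (f : Fin n → Fin n → ℝ)
    (hs : ∀ i k, f i k = f k i) (hd : ∀ i, f i i = 0) :
    2 * ∑ p ∈ (s ×ˢ s).filter (fun p => p.1 < p.2), f p.1 p.2
      = ∑ i ∈ s, ∑ k ∈ s, f i k := by
  have h1 : ∑ p ∈ (s ×ˢ s).filter (fun p => p.1 < p.2), f p.1 p.2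
      = ∑ p ∈ (s ×ˢ s).filter (fun p => p.2 < p.1), f p.1 p.2 := by
    apply Finset.sum_nbij' (fun p => Prod.swap p) (fun p => Prod.swap p) <;>
      simp_all [Finset.mem_filter, hs]
  have h2 : ∑ p ∈ (s ×ˢ s).filter (fun p => p.1 < p.2), f p.1 p.2
      + ∑ p ∈ (s ×ˢ s).filter (fun p => ¬ p.1 < p.2), f p.1 p.2
      = ∑ p ∈ s ×ˢ s, f p.1 p.2 := Finset.sum_filter_add_sum_filter_not _ _ _
  have h3 : ∑ p ∈ (s ×ˢ s).filter (fun p => ¬ p.1 < p.2), f p.1 p.2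
      = ∑ p ∈ (s ×ˢ s).filter (fun p => p.2 < p.1), f p.1 p.2 := by
    rw [← Finset.sum_filter_add_sum_filter_not ((s ×ˢ s).filter (fun p => ¬ p.1 < p.2))
      (fun p => p.2 < p.1)]
    have hz : ∑ p ∈ ((s ×ˢ s).filter (fun p => ¬ p.1 < p.2)).filter (fun p => ¬ p.2 < p.1),
        f p.1 p.2 = 0 := by
      apply Finset.sum_eq_zero
      intro p hp
      simp only [Finset.mem_filter] at hp
      have : p.1 = p.2 := le_antisymm (not_lt.mp hp.2) (not_lt.mp hp.1.2)
      rw [this, hd]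
    rw [hz, add_zero, Finset.filter_filter]
    congr 1
    ext p
    simp only [Finset.mem_filter]
    constructor
    · rintro ⟨h, _, h2⟩; exact ⟨h, h2⟩
    · rintro ⟨h, h2⟩; exact ⟨h, not_lt.mpr h2.le, h2⟩
  rw [two_mul]
  nth_rewrite 2 [h1]
  rw [← h3, h2, Finset.sum_product]

private lemma facet_double_aux (A : Fin (d+1) → Pt d) (j : Fin (d+1)) :
    2 * facetEdgeSqSum A j
    = (∑ i, ∑ k, dist (A i) (A k) ^ 2) - 2 * ∑ k, dist (A j) (A k) ^ 2 := by
  set f : Fin (d+1) → Fin (d+1) → ℝ := fun i k => dist (A i) (A k) ^ 2 with hf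
  have hs : ∀ i k, f i k = f k i := fun i k => by simp [hf, dist_comm]
  have hd0 : ∀ i, f i i = 0 := fun i => by simp [hf]
  have hfil : Finset.univ.filter
      (fun p : Fin (d+1) × Fin (d+1) => p.1 < p.2 ∧ p.1 ≠ j ∧ p.2 ≠ j)
      = ((Finset.univ.erase j) ×ˢ (Finset.univ.erase j)).filter (fun p => p.1 < p.2) := by
    ext p
    simp [Finset.mem_filter, Finset.mem_erase, and_comm]
  rw [facetEdgeSqSum, hfil, pair_double_aux _ f hs hd0]
  have inner_sum : ∀ i, ∑ k ∈ Finset.univ.erase j, f i k = (∑ k, f i k) - f i j := by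
    intro i
    rw [eq_sub_iff_add_eq, Finset.sum_erase_add _ _ (Finset.mem_univ j)]
  calc ∑ i ∈ Finset.univ.erase j, ∑ k ∈ Finset.univ.erase j, f i k
      = ∑ i ∈ Finset.univ.erase j, ((∑ k, f i k) - f i j) := by
        exact Finset.sum_congr rfl (fun i _ => inner_sum i)
    _ = (∑ i, ((∑ k, f i k) - f i j)) - ((∑ k, f j k) - f j j) := by
        rw [eq_sub_iff_add_eq, Finset.sum_erase_add _ _ (Finset.mem_univ j)]
    _ = (∑ i, ∑ k, f i k) - 2 * ∑ k, f j k := by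
        rw [Finset.sum_sub_distrib, hd0]
        have : ∑ i, f i j = ∑ k, f j k := Finset.sum_congr rfl (fun i _ => hs i j)
        rw [this]; ring

open RealInnerProductSpace in
private lemma vertex_sum_aux (A : Fin (d+1) → Pt d) (j : Fin (d+1)) :
    ∑ k, dist (A j) (A k) ^ 2
      = ((∑ i, ‖A i‖ ^ 2) - ((d:ℝ)+1)⁻¹ * ‖∑ i, A i‖ ^ 2)
        + ((d:ℝ)+1) * dist (ctr A) (A j) ^ 2 := by
  have hn : ((d:ℝ)+1) ≠ 0 := by positivity
  have hcent : ctr A = (((d:ℝ)+1))⁻¹ • ∑ i, A i := by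
    rw [ctr, Finset.centroid_def, Finset.affineCombination_eq_linear_combination]
    · simp [Finset.centroidWeights, Finset.smul_sum]
    · simp [Finset.centroidWeights]; field_simp
  have hdist : ∀ x y : EuclideanSpace ℝ (Fin d),
      dist x y ^ 2 = ‖x‖ ^ 2 - 2 * ⟪x, y⟫ + ‖y‖ ^ 2 := by
    intro x y; rw [dist_eq_norm, norm_sub_sq_real]
  set S : EuclideanSpace ℝ (Fin d) := ∑ i, A i with hS
  have hLHS : ∑ k, dist (A j) (A k) ^ 2
      = ((d:ℝ)+1) * ‖A j‖ ^ 2 - 2 * ⟪A j, S⟫ + ∑ k, ‖A k‖ ^ 2 := by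
    simp only [hdist, Finset.sum_add_distrib, Finset.sum_sub_distrib,
      Finset.sum_const, Finset.card_univ, Fintype.card_fin, nsmul_eq_mul,
      ← Finset.mul_sum, hS, inner_sum]
    push_cast
    ring
  have hR : dist (ctr A) (A j) ^ 2
      = (((d:ℝ)+1)⁻¹) ^ 2 * ‖S‖ ^ 2 - 2 * (((d:ℝ)+1)⁻¹ * ⟪S, A j⟫) + ‖A j‖ ^ 2 := by
    rw [hcent, hdist, norm_smul, real_inner_smul_left]
    simp [abs_of_nonneg (by positivity : (0:ℝ) ≤ ((d:ℝ)+1)⁻¹), mul_pow]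
  rw [hLHS, hR, real_inner_comm (A j) S]
  field_simp
  ring

private lemma facet_key_aux (A : Fin (d+1) → Pt d) (j : Fin (d+1)) :
    2 * facetEdgeSqSum A j = (∑ i, ∑ k, dist (A i) (A k) ^ 2)
      - 2 * (((∑ i, ‖A i‖ ^ 2) - ((d:ℝ)+1)⁻¹ * ‖∑ i, A i‖ ^ 2)
          + ((d:ℝ)+1) * dist (ctr A) (A j) ^ 2) := by
  rw [facet_double_aux, vertex_sum_aux]

/-- Theorem 3.2 (i). For a `d`-simplex `S`, the centroid and
the circumcenter coincide iff `S` has well-distributed edge lengths. -/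
theorem statement4 (d : ℕ) (hd : 2 ≤ d)
    (A : Fin (d+1) → Pt d) (hA : AffineIndependent ℝ A) :
    IsCircumcenter A (ctr A) ↔ WellDistributed A := by
  constructor
  · rintro ⟨r, hr⟩ j k
    have h1 := facet_key_aux A j
    have h2 := facet_key_aux A k
    rw [hr j] at h1
    rw [hr k] at h2
    linarith
  · intro h
    refine ⟨dist (ctr A) (A 0), fun i => ?_⟩
    have h1 := facet_key_aux A i
    have h2 := facet_key_aux A 0
    have h3 := h i 0
    have hn : ((d:ℝ)+1) ≠ 0 := by positivity
    have h4 : ((d:ℝ)+1) * dist (ctr A) (A i) ^ 2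
        = ((d:ℝ)+1) * dist (ctr A) (A 0) ^ 2 := by linarith
    have h5 := mul_left_cancel₀ hn h4
    rw [← Real.sqrt_sq dist_nonneg, ← Real.sqrt_sq (dist_nonneg (x := ctr A) (y := A 0)), h5]
end
end

section
/- For a d-simplex S in Euclidean d-space, the incenter of S coincides with the centroid of S if and only if S is equiareal, i.e., all d+1 facets of S have the same (d-1)-dimensional volume; equivalently, all d+1 altitudes of S (the distance from each vertex to the affine span of the opposite facet) have equal length. -/
/-
Common geometric notions for simplices in Euclidean d-space, following
Edmonds–Hajja–Martini, "Coincidences of simplex centers and related facial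
structures".  A d-simplex is given by its d+1 affinely independent vertices
`A : Fin (d+1) → EuclideanSpace ℝ (Fin d)`.
-/

noncomputable section

variable {d : ℕ}

/-!
The centroid of a simplex is the image of the vertex `A j` under the homothety of ratio
`1/(d+1)` centred at the centroid of the opposite facet. That centre lies on the facet
hyperplane, so the homothety preserves the hyperplane and scales distances to it: the
centroid is at distance `altitude A j / (d+1)` from facet `j`. Hence it is equidistant
from the facets exactly when all altitudes agree, and it always lies in the interior.
-/

open AffineMap Finset EuclideanGeometry

section
variable {k V P ι : Type*} [Field k] [CharZero k] [AddCommGroup V] [Module k V] [AddTorsor V P]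

theorem Finset.centroid_vsub_eq_smul_sum {s : Finset ι} (hs : s.Nonempty) (p : ι → P) (p₀ : P) :
    s.centroid k p -ᵥ p₀ = (#s : k)⁻¹ • ∑ i ∈ s, (p i -ᵥ p₀) := by
  rw [centroid_vsub_const _ _ hs, centroid_def, affineCombination_eq_linear_combination
    (hw := sum_centroidWeights_eq_one_of_nonempty _ _ hs)]
  simp [smul_sum]

theorem Finset.compl_singleton_nonempty [Fintype ι] [DecidableEq ι] [Nontrivial ι] (j : ι) :
    ({j}ᶜ : Finset ι).Nonempty :=
  let ⟨i, hi⟩ := exists_ne j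
  ⟨i, by simpa using hi⟩

theorem Finset.univ_centroid_eq_lineMap [Fintype ι] [DecidableEq ι] [Nontrivial ι] (p : ι → P)
    (j : ι) :
    univ.centroid k p = lineMap (({j}ᶜ : Finset ι).centroid k p) (p j) (Fintype.card ι : k)⁻¹ := by
  have hne := compl_singleton_nonempty j
  have hcard : (#({j}ᶜ : Finset ι) : k) = Fintype.card ι - 1 := by
    rw [card_compl, card_singleton, Nat.cast_sub Fintype.card_pos, Nat.cast_one]
  have hsum : ∑ i ∈ ({j}ᶜ : Finset ι), (p i -ᵥ p j) = ∑ i, (p i -ᵥ p j) := by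
    rw [← sum_compl_add_sum {j}, sum_singleton, vsub_self, add_zero]
  have hn : (Fintype.card ι : k) - 1 ≠ 0 := by
    rw [← hcard, Nat.cast_ne_zero]
    exact hne.card_ne_zero
  rw [← vsub_left_cancel_iff (p := p j), lineMap_vsub_right, centroid_vsub_eq_smul_sum hne,
    centroid_vsub_eq_smul_sum univ_nonempty, hsum, hcard, card_univ, smul_smul]
  congr 1
  field_simp

end

section
variable {V P ι : Type*} [NormedAddCommGroup V] [InnerProductSpace ℝ V] [MetricSpace P]
  [NormedAddTorsor V P]

theorem infDist_lineMap_of_mem (s : AffineSubspace ℝ P) [s.direction.HasOrthogonalProjection]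
    {x : P} (hx : x ∈ s) (p : P) (t : ℝ) :
    Metric.infDist (lineMap x p t) s = |t| * Metric.infDist p s := by
  have : Nonempty s := ⟨⟨x, hx⟩⟩
  have hproj : (orthogonalProjection s (lineMap x p t) : P) =
      lineMap x (orthogonalProjection s p) t := by
    have h := (s.subtype.comp (orthogonalProjection s).toAffineMap).apply_lineMap x p t
    exact h.trans (by simp [orthogonalProjection_eq_self_iff.mpr hx])
  rw [← dist_orthogonalProjection_eq_infDist, ← dist_orthogonalProjection_eq_infDist, hproj,
    dist_eq_norm_vsub V, dist_eq_norm_vsub V, lineMap_vsub_lineMap, vsub_self,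
    lineMap_apply_module', sub_zero, add_zero, norm_smul, Real.norm_eq_abs]

theorem infDist_univ_centroid_affineSpan_facet [Fintype ι] (p : ι → P) (j : ι) :
    Metric.infDist (univ.centroid ℝ p) (affineSpan ℝ (p '' {i | i ≠ j})) =
      (Fintype.card ι : ℝ)⁻¹ * Metric.infDist (p j) (affineSpan ℝ (p '' {i | i ≠ j})) := by
  classical
  rcases subsingleton_or_nontrivial ι with hι | hι
  · have : p '' {i | i ≠ j} = ∅ := by simp [Subsingleton.elim _ j]
    simp [this]
  have hmem : ({j}ᶜ : Finset ι).centroid ℝ p ∈ affineSpan ℝ (p '' {i | i ≠ j}) :=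
    affineCombination_mem_affineSpan_image
      (sum_centroidWeights_eq_one_of_nonempty ℝ _ (compl_singleton_nonempty j)) (by simp) p
  rw [univ_centroid_eq_lineMap p j, infDist_lineMap_of_mem _ hmem,
    abs_of_pos (by positivity)]

end

theorem ctr_mem_interior_convexHull {A : Fin (d+1) → Pt d} (hA : AffineIndependent ℝ A) :
    ctr A ∈ interior (convexHull ℝ (Set.range A)) :=
  (⟨A, hA, by simp [hA.affineSpan_eq_top_iff_card_eq_finrank_add_one]⟩ :
    AffineBasis (Fin (d+1)) ℝ (Pt d)).centroid_mem_interior_convexHull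

theorem infDist_ctr_facetSpan (A : Fin (d+1) → Pt d) (j : Fin (d+1)) :
    Metric.infDist (ctr A) (facetSpan A j) = ((d : ℝ) + 1)⁻¹ * altitude A j := by
  rw [ctr, facetSpan, altitude, infDist_univ_centroid_affineSpan_facet, Fintype.card_fin,
    Nat.cast_succ, facetSpan]

theorem statement6_general (d : ℕ)
    (A : Fin (d+1) → Pt d) (hA : AffineIndependent ℝ A) :
    IsIncenter A (ctr A) ↔ Equiareal A := by
  have hscale : ((d : ℝ) + 1)⁻¹ ≠ 0 := by positivity
  constructor
  · rintro ⟨-, r, hr⟩ j k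
    refine mul_left_cancel₀ hscale ?_
    rw [← infDist_ctr_facetSpan, ← infDist_ctr_facetSpan, hr j, hr k]
  · intro hequi
    refine ⟨ctr_mem_interior_convexHull hA, ((d : ℝ) + 1)⁻¹ * altitude A 0, fun j => ?_⟩
    rw [infDist_ctr_facetSpan, hequi j 0]

/-- Theorem 3.2 (iii). For a `d`-simplex `S`, the incenter
coincides with the centroid iff `S` is equiareal (all facets have the same
`(d-1)`-volume; equivalently, all altitudes are equal). -/
theorem statement6 (d : ℕ) (hd : 2 ≤ d)
    (A : Fin (d+1) → Pt d) (hA : AffineIndependent ℝ A) :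
    IsIncenter A (ctr A) ↔ Equiareal A :=
  statement6_general d A hA
end
end

section
/- Let S = [T, P] be a d-simplex in Euclidean d-space obtained from a (d-1)-simplex T with circumradius R_T by adjoining a vertex P whose distance to every vertex of T equals h, where h > R_T. Then the circumradius R_S of S is given by R_S = h^2 / (2·sqrt(h^2 - R_T^2)). -/
/-
Common geometric notions for simplices in Euclidean d-space, following
Edmonds–Hajja–Martini, "Coincidences of simplex centers and related facial
structures".  A d-simplex is given by its d+1 affinely independent vertices
`A : Fin (d+1) → EuclideanSpace ℝ (Fin d)`.
-/

noncomputable section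

variable {d : ℕ}

open Module RealInnerProductSpace

lemma aux_affind {d : ℕ} (B : Fin d → Pt d) (P : Pt d)
    (hS : AffineIndependent ℝ (Fin.snoc B P : Fin (d+1) → Pt d)) :
    AffineIndependent ℝ B := by
  have h1 := hS.comp_embedding (Fin.castSuccEmb (n := d))
  have : (Fin.snoc B P : Fin (d+1) → Pt d) ∘ Fin.castSuccEmb = B := by
    ext i; simp
  rwa [this] at h1

lemma aux_orth {d : ℕ} (B : Fin d → Pt d) (X Y : Pt d) (rX rY : ℝ)
    (hX : ∀ i, dist X (B i) = rX) (hY : ∀ i, dist Y (B i) = rY) :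
    X - Y ∈ (vectorSpan ℝ (Set.range B))ᗮ := by
  rw [Submodule.mem_orthogonal]
  intro u hu
  rw [vectorSpan_def] at hu
  induction hu using Submodule.span_induction with
  | mem u hu =>
    obtain ⟨x, ⟨i, rfl⟩, y, ⟨j, rfl⟩, rfl⟩ := hu
    have := EuclideanGeometry.inner_vsub_vsub_of_dist_eq_of_dist_eq (c₁ := Y) (c₂ := X)
      (p₁ := B j) (p₂ := B i) (by rw [dist_comm _ Y, dist_comm _ Y, hY, hY])
      (by rw [dist_comm _ X, dist_comm _ X, hX, hX])
    rw [real_inner_comm]; simpa using this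
  | zero => simp
  | add u v _ _ h1 h2 => rw [inner_add_left, h1, h2]; ring
  | smul a u _ h1 => rw [inner_smul_left, h1]; ring

set_option maxHeartbeats 1000000 in
/-- circumradius formula from the proof of Theorem 3.4.
Let `S = [T, P]` be a `d`-simplex obtained from a `(d-1)`-simplex `T` (with
vertices `B` and circumradius `R_T`) by adjoining a vertex `P` at distance `h`
from every vertex of `T`, where `h > R_T`.  Then the circumradius `R_S` of `S`
satisfies `R_S = h² / (2 √(h² - R_T²))`. -/
theorem statement9 (d : ℕ) (hd : 1 ≤ d)
    (B : Fin d → Pt d) (P : Pt d)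
    (hS : AffineIndependent ℝ (Fin.snoc B P : Fin (d+1) → Pt d))
    (RT h RS : ℝ)
    (hRT : ∃ CT ∈ affineSpan ℝ (Set.range B), ∀ i, dist CT (B i) = RT)
    (hh : ∀ i, dist P (B i) = h)
    (hhRT : RT < h)
    (hRS : ∃ CS : Pt d, (∀ i, dist CS (B i) = RS) ∧ dist CS P = RS) :
    RS = h ^ 2 / (2 * Real.sqrt (h ^ 2 - RT ^ 2)) := by
  obtain ⟨CT, hCTmem, hCTd⟩ := hRT
  obtain ⟨CS, hCSB, hCSP⟩ := hRS
  have i0 : Fin d := ⟨0, hd⟩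
  have hRT0 : 0 ≤ RT := (hCTd i0) ▸ dist_nonneg
  have hRS0 : 0 ≤ RS := hCSP ▸ dist_nonneg
  set V := vectorSpan ℝ (Set.range B) with hV
  have hB : AffineIndependent ℝ B := aux_affind B P hS
  have hVrank : finrank ℝ V = d - 1 := hB.finrank_vectorSpan (by simp; omega)
  have horth : finrank ℝ Vᗮ = 1 := by
    have h1 := V.finrank_add_finrank_orthogonal
    have hdim : finrank ℝ (Pt d) = d := finrank_euclideanSpace_fin
    rw [hVrank, hdim] at h1
    omega
  have hu : P - CT ∈ Vᗮ := aux_orth B P CT h RT hh hCTd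
  have hw : CS - CT ∈ Vᗮ := aux_orth B CS CT RS RT hCSB hCTd
  have hune : P - CT ≠ 0 := by
    intro h0
    have hPC : P = CT := by rwa [sub_eq_zero] at h0
    have : h = RT := by rw [← hh i0, hPC, hCTd i0]
    linarith
  have hspan : Submodule.span ℝ {P - CT} = Vᗮ := by
    apply Submodule.eq_of_le_of_finrank_le
    · rw [Submodule.span_le]; simpa using hu
    · rw [horth, finrank_span_singleton hune]
  obtain ⟨a, ha⟩ := Submodule.mem_span_singleton.mp (hspan ▸ hw)
  set u : Pt d := P - CT with hudef
  set m : ℝ := ‖u‖ with hmdef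
  have hm0 : 0 ≤ m := norm_nonneg _
  have hVi : ∀ i, CT - B i ∈ V := by
    intro i
    have := AffineSubspace.vsub_mem_direction hCTmem
      (mem_affineSpan ℝ (Set.mem_range_self i))
    rwa [direction_affineSpan] at this
  have hinner : ∀ i, ⟪u, CT - B i⟫ = 0 := by
    intro i
    rw [real_inner_comm]
    exact Submodule.inner_right_of_mem_orthogonal (hVi i) hu
  -- h² = m² + RT²
  have hPB : h ^ 2 = m ^ 2 + RT ^ 2 := by
    have h1 : P - B i0 = u + (CT - B i0) := by rw [hudef]; abel
    have h2 : h ^ 2 = ‖P - B i0‖ ^ 2 := by rw [← hh i0, dist_eq_norm]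
    rw [h2, h1, norm_add_sq_real, hinner i0]
    have : ‖CT - B i0‖ = RT := by rw [← dist_eq_norm, hCTd i0]
    rw [this]; ring
  -- RS² = a²m² + RT²
  have hE2 : RS ^ 2 = a ^ 2 * m ^ 2 + RT ^ 2 := by
    have h1 : CS - B i0 = a • u + (CT - B i0) := by
      have : CS - CT = a • u := ha.symm
      rw [← this]; abel
    have h2 : RS ^ 2 = ‖CS - B i0‖ ^ 2 := by rw [← hCSB i0, dist_eq_norm]
    have h3 : ⟪a • u, CT - B i0⟫ = 0 := by rw [inner_smul_left, hinner i0]; simp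
    rw [h2, h1, norm_add_sq_real, h3]
    have h4 : ‖CT - B i0‖ = RT := by rw [← dist_eq_norm, hCTd i0]
    rw [h4, norm_smul, Real.norm_eq_abs, mul_pow, sq_abs, ← hmdef]
    ring
  -- RS = |a-1| m
  have hE3 : RS = |a - 1| * m := by
    have h1 : CS - P = (a - 1) • u := by
      have h2 : CS - CT = a • u := ha.symm
      have : CS - P = (CS - CT) - u := by rw [hudef]; abel
      rw [this, h2, sub_smul, one_smul]
    rw [← hCSP, dist_eq_norm, h1, norm_smul, Real.norm_eq_abs, hmdef]
  have hmpos : 0 < m := by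
    rcases hm0.lt_or_eq with h' | h'
    · exact h'
    · exfalso; nlinarith [hPB]
  -- RT² = (1-2a) m²
  have hkey : RT ^ 2 = (1 - 2 * a) * m ^ 2 := by
    have : RS ^ 2 = (a - 1) ^ 2 * m ^ 2 := by rw [hE3]; rw [mul_pow, sq_abs]
    nlinarith [hE2, this]
  have ha1 : a ≤ 1 := by nlinarith [sq_nonneg RT, sq_nonneg m]
  have hRSval : RS = (1 - a) * m := by
    rw [hE3, abs_of_nonpos (by linarith)]; ring
  have hsqrt : Real.sqrt (h ^ 2 - RT ^ 2) = m := by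
    have : h ^ 2 - RT ^ 2 = m ^ 2 := by linarith
    rw [this, Real.sqrt_sq hm0]
  rw [hsqrt, eq_div_iff (by positivity)]
  nlinarith [hRSval, hkey, hPB]
end
end

section
/- For every d ≥ 4 there exists a d-simplex in Euclidean d-space that is equiradial (all facets have the same circumradius) but not equiareal (not all facets have equal (d-1)-dimensional volume; equivalently, not all altitudes are equal). -/
/-
Common geometric notions for simplices in Euclidean d-space, following
Edmonds–Hajja–Martini, "Coincidences of simplex centers and related facial
structures".  A d-simplex is given by its d+1 affinely independent vertices
`A : Fin (d+1) → EuclideanSpace ℝ (Fin d)`.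
-/

noncomputable section

variable {d : ℕ}

/-!
Take as vertices the standard basis vectors `e₀, …, e_{d-1}` and an apex `q • 𝟙` on the
diagonal. The base facet is regular, with circumradius `√((d - 1) / d)`. The point
`((1 - q) • 𝟙 - e_j) / (d - 2)` lies in the span of the facet opposite `e_j` and is equidistant
from its base vertices; its distances to them and to the apex both equal `√((d - 1) / d)` exactly
when `(d q - 1)² = d - 3`, which has a solution with `d q ≠ 1` once `d ≥ 4`.

The altitude from the apex is at most its distance `|d q - 1| / √d` to the centroid of the base.
The facet opposite `e_j` lies in the hyperplane `⟪q • 𝟙 - (d q - 1) • e_j, x⟫ = q`, whose normal has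
length `(d - 2) / √d`, so the altitude from `e_j` is at least `|d q - 1| √d / (d - 2)`, which is
larger.
-/

open Finset
open scoped RealInnerProductSpace

theorem sum_smul_mem_affineSpan_image_ne {ι V : Type*} [Fintype ι] [DecidableEq ι]
    [AddCommGroup V] [Module ℝ V] (A : ι → V) {j : ι} {w : ι → ℝ} (hwj : w j = 0)
    (hw : ∑ i, w i = 1) : ∑ i, w i • A i ∈ affineSpan ℝ (A '' {i | i ≠ j}) := by
  have hmem : ∀ i, i ∈ univ.erase j ↔ i ≠ j := by simp
  rw [← sum_erase _ hwj, sum_subtype _ hmem] at hw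
  rw [← sum_erase univ (f := fun i => w i • A i) (a := j) (by simp [hwj]), sum_subtype _ hmem,
    ← univ.affineCombination_eq_linear_combination (fun i : {i // i ≠ j} => A i) _ hw,
    Set.image_eq_range]
  exact affineCombination_mem_affineSpan hw _

theorem abs_inner_sub_le_norm_mul_infDist {E : Type*} [NormedAddCommGroup E]
    [InnerProductSpace ℝ E] {S : Set E} (hS : S.Nonempty) {n : E} {c : ℝ}
    (hc : ∀ x ∈ S, ⟪n, x⟫ = c) (p : E) :
    |⟪n, p⟫ - c| ≤ ‖n‖ * Metric.infDist p (affineSpan ℝ S) := by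
  have hspan : ∀ y ∈ affineSpan ℝ S, ⟪n, y⟫ = c := fun y hy => by
    refine affineSpan_induction (p := fun y => ⟪n, y⟫ = c) hy hc ?_
    intro t u v w hu hv hw
    simp only [vsub_eq_sub, vadd_eq_add, inner_add_right, inner_sub_right, inner_smul_right,
      hu, hv, hw]
    ring
  rcases eq_or_ne n 0 with rfl | hn
  · obtain ⟨x, hx⟩ := hS
    simp [← hc x hx]
  rw [← div_le_iff₀' (norm_pos_iff.2 hn), Metric.le_infDist ((affineSpan_nonempty ℝ).2 hS)]
  intro y hy
  rw [div_le_iff₀' (norm_pos_iff.2 hn), ← hspan y hy, ← inner_sub_right, dist_eq_norm]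
  exact abs_real_inner_le_norm _ _

theorem dist_eq_sqrt_of_norm_sub_sq {E : Type*} [NormedAddCommGroup E] {x y : E} {r : ℝ}
    (h : ‖x - y‖ ^ 2 = r) : dist x y = √r := by
  rw [dist_eq_norm, ← h, Real.sqrt_sq (norm_nonneg _)]

def allOnes (d : ℕ) : Pt d := WithLp.toLp 2 fun _ => 1

@[simp]
theorem inner_single_one_single_one (i j : Fin d) :
    ⟪EuclideanSpace.single i (1 : ℝ), EuclideanSpace.single j 1⟫ = if i = j then 1 else 0 := by
  simp [EuclideanSpace.inner_single_left]

@[simp]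
theorem inner_single_one_allOnes (i : Fin d) :
    ⟪EuclideanSpace.single i (1 : ℝ), allOnes d⟫ = 1 := by
  simp [EuclideanSpace.inner_single_left, allOnes]

@[simp]
theorem inner_allOnes_single_one (i : Fin d) :
    ⟪allOnes d, EuclideanSpace.single i (1 : ℝ)⟫ = 1 := by
  rw [real_inner_comm, inner_single_one_allOnes]

theorem inner_allOnes_allOnes : ⟪allOnes d, allOnes d⟫ = d := by
  simp only [allOnes, PiLp.inner_apply]
  simp

theorem sum_single_one : ∑ i, EuclideanSpace.single i (1 : ℝ) = allOnes d := by
  ext k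
  simp [allOnes]

def apexSimplex (d : ℕ) (q : ℝ) : Fin (d+1) → Pt d :=
  Fin.lastCases (q • allOnes d) fun i => EuclideanSpace.single i 1

@[simp]
theorem apexSimplex_last (q : ℝ) : apexSimplex d q (Fin.last d) = q • allOnes d :=
  Fin.lastCases_last

@[simp]
theorem apexSimplex_castSucc (q : ℝ) (i : Fin d) :
    apexSimplex d q i.castSucc = EuclideanSpace.single i 1 :=
  Fin.lastCases_castSucc i

theorem affineIndependent_apexSimplex {q : ℝ} (hq : d * q ≠ 1) :
    AffineIndependent ℝ (apexSimplex d q) := by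
  rw [affineIndependent_iff_of_fintype]
  intro w hw0 hw
  rw [Finset.weightedVSub_eq_linear_combination _ hw0, Fin.sum_univ_castSucc] at hw
  simp only [apexSimplex_castSucc, apexSimplex_last] at hw
  have hcoord (j : Fin d) : w j.castSucc + w (Fin.last d) * q = 0 := by
    simpa [inner_add_right, inner_sum, inner_smul_right] using
      congrArg (⟪EuclideanSpace.single j (1 : ℝ), ·⟫) hw
  have hlast : w (Fin.last d) = 0 := by
    have hsum := congrArg (⟪allOnes d, ·⟫) hw
    simp only [inner_add_right, inner_sum, inner_smul_right, inner_allOnes_single_one,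
      inner_allOnes_allOnes, inner_zero_right, mul_one] at hsum
    rw [Fin.sum_univ_castSucc] at hw0
    have hlin : (1 - d * q) * w (Fin.last d) = 0 := by linear_combination hw0 - hsum
    exact (mul_eq_zero.1 hlin).resolve_left (sub_ne_zero.2 hq.symm)
  intro i
  induction i using Fin.lastCases with
  | last => exact hlast
  | cast j => linear_combination hcoord j - q * hlast

theorem inv_smul_allOnes_mem_affineSpan_facet_last (hd : d ≠ 0) (q : ℝ) :
    (d : ℝ)⁻¹ • allOnes d ∈ affineSpan ℝ (apexSimplex d q '' {i | i ≠ Fin.last d}) := by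
  have hd' : (d : ℝ) ≠ 0 := Nat.cast_ne_zero.2 hd
  let w : Fin (d+1) → ℝ := Fin.lastCases 0 fun _ => (d : ℝ)⁻¹
  have hw : ∑ i, w i = 1 := by simp [w, Fin.sum_univ_castSucc, hd']
  have hC : ∑ i, w i • apexSimplex d q i = (d : ℝ)⁻¹ • allOnes d := by
    simp [w, Fin.sum_univ_castSucc, ← Finset.smul_sum, sum_single_one]
  exact hC ▸ sum_smul_mem_affineSpan_image_ne _ (by simp [w]) hw

theorem isFacetCircumradius_apexSimplex_last (hd : d ≠ 0) (q : ℝ) :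
    IsFacetCircumradius (apexSimplex d q) (Fin.last d) √((d - 1) / d) := by
  have hd' : (d : ℝ) ≠ 0 := Nat.cast_ne_zero.2 hd
  refine ⟨_, inv_smul_allOnes_mem_affineSpan_facet_last hd q, fun i hi => ?_⟩
  induction i using Fin.lastCases with
  | last => exact absurd rfl hi
  | cast k =>
    refine dist_eq_sqrt_of_norm_sub_sq ?_
    rw [← real_inner_self_eq_norm_sq]
    simp only [apexSimplex_castSucc, inner_sub_left, inner_sub_right, real_inner_smul_left,
      real_inner_smul_right, inner_single_one_single_one, inner_single_one_allOnes,
      inner_allOnes_single_one, inner_allOnes_allOnes, if_pos]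
    field_simp
    ring

theorem isFacetCircumradius_apexSimplex_castSucc {q : ℝ} (hq : (d * q - 1) ^ 2 = d - 3)
    (j : Fin d) : IsFacetCircumradius (apexSimplex d q) j.castSucc √((d - 1) / d) := by
  have hd : (3 : ℝ) ≤ d := by nlinarith [sq_nonneg ((d : ℝ) * q - 1)]
  have hd2 : (d : ℝ) - 2 ≠ 0 := by linarith
  set c : ℝ := ((d : ℝ) - 2)⁻¹ with hc
  have hc' : c * (d - 2) = 1 := inv_mul_cancel₀ hd2
  let w : Fin (d+1) → ℝ := Fin.lastCases (-c) fun k => c - if k = j then c else 0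
  have hw : ∑ i, w i = 1 := by
    simp only [w, Fin.sum_univ_castSucc, Fin.lastCases_castSucc, Fin.lastCases_last,
      sum_sub_distrib, sum_const, card_univ, Fintype.card_fin, nsmul_eq_mul, sum_ite_eq',
      mem_univ, if_true]
    linear_combination hc'
  have hC : ∑ i, w i • apexSimplex d q i =
      c • ((1 - q) • allOnes d - EuclideanSpace.single j 1) := by
    simp only [w, Fin.sum_univ_castSucc, Fin.lastCases_castSucc, Fin.lastCases_last,
      apexSimplex_castSucc, apexSimplex_last, sub_smul, ite_smul, zero_smul, sum_sub_distrib,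
      ← smul_sum, sum_single_one, sum_ite_eq', mem_univ, if_true]
    module
  refine ⟨_, hC ▸ sum_smul_mem_affineSpan_image_ne _ (by simp [w]) hw, fun i hi => ?_⟩
  refine dist_eq_sqrt_of_norm_sub_sq ?_
  rw [← real_inner_self_eq_norm_sq]
  induction i using Fin.lastCases with
  | last =>
    simp only [apexSimplex_last, inner_sub_left, inner_sub_right, real_inner_smul_left,
      real_inner_smul_right, inner_single_one_single_one, inner_single_one_allOnes,
      inner_allOnes_single_one, inner_allOnes_allOnes, if_pos]
    rw [hc]
    field_simp
    linear_combination ((d : ℝ) - 1) ^ 2 * hq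
  | cast k =>
    have hk : k ≠ j := fun h => hi (h ▸ rfl)
    simp only [apexSimplex_castSucc, inner_sub_left, inner_sub_right, real_inner_smul_left,
      real_inner_smul_right, inner_single_one_single_one, inner_single_one_allOnes,
      inner_allOnes_single_one, inner_allOnes_allOnes, if_pos, if_neg hk, if_neg (Ne.symm hk)]
    rw [hc]
    field_simp
    linear_combination hq

theorem altitude_apexSimplex_last_sq_le (hd : d ≠ 0) (q : ℝ) :
    altitude (apexSimplex d q) (Fin.last d) ^ 2 ≤ (d * q - 1) ^ 2 / d := by
  have hd' : (d : ℝ) ≠ 0 := Nat.cast_ne_zero.2 hd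
  rw [altitude, facetSpan, apexSimplex_last]
  calc Metric.infDist (q • allOnes d) (affineSpan ℝ (apexSimplex d q '' {i | i ≠ Fin.last d})) ^ 2
      ≤ dist (q • allOnes d) ((d : ℝ)⁻¹ • allOnes d) ^ 2 :=
        pow_le_pow_left₀ Metric.infDist_nonneg
          (Metric.infDist_le_dist_of_mem (inv_smul_allOnes_mem_affineSpan_facet_last hd q)) 2
    _ = (d * q - 1) ^ 2 / d := by
        rw [dist_eq_norm, ← real_inner_self_eq_norm_sq]
        simp only [inner_sub_left, inner_sub_right, real_inner_smul_left, real_inner_smul_right,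
          inner_allOnes_allOnes]
        field_simp

theorem abs_mul_sub_one_le_altitude_apexSimplex_castSucc (q : ℝ) (j : Fin d) :
    |d * q - 1| ≤ ‖q • allOnes d - (d * q - 1) • EuclideanSpace.single j (1 : ℝ)‖ *
      altitude (apexSimplex d q) j.castSucc := by
  rw [altitude, facetSpan, apexSimplex_castSucc]
  have hS : (apexSimplex d q '' {i | i ≠ j.castSucc}).Nonempty :=
    ⟨_, Fin.last d, Fin.castSucc_ne_last j |>.symm, rfl⟩
  have hplane : ∀ x ∈ apexSimplex d q '' {i | i ≠ j.castSucc},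
      ⟪q • allOnes d - (d * q - 1) • EuclideanSpace.single j (1 : ℝ), x⟫ = q := by
    rintro _ ⟨i, hi, rfl⟩
    induction i using Fin.lastCases with
    | last =>
      simp only [apexSimplex_last, inner_sub_left, real_inner_smul_left, real_inner_smul_right,
        inner_single_one_allOnes, inner_allOnes_allOnes]
      ring
    | cast k =>
      have hk : j ≠ k := fun h => hi (h ▸ rfl)
      simp only [apexSimplex_castSucc, inner_sub_left, real_inner_smul_left,
        inner_allOnes_single_one, inner_single_one_single_one, if_neg hk]
      ring
  have h := abs_inner_sub_le_norm_mul_infDist hS hplane (EuclideanSpace.single j 1)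
  simp only [inner_sub_left, real_inner_smul_left,
    inner_allOnes_single_one, inner_single_one_single_one, if_pos] at h
  rwa [show q * 1 - (d * q - 1) * 1 - q = -(d * q - 1) by ring, abs_neg] at h

theorem not_equiareal_apexSimplex {q : ℝ} (hq : (d * q - 1) ^ 2 = d - 3) (hq1 : d * q ≠ 1) :
    ¬ Equiareal (apexSimplex d q) := by
  have hd : (3 : ℝ) < d := by
    nlinarith [pow_pos (abs_pos.2 (sub_ne_zero.2 hq1)) 2, sq_abs ((d : ℝ) * q - 1)]
  have hd0 : d ≠ 0 := by rintro rfl; norm_num at hd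
  set j : Fin d := ⟨0, by omega⟩
  set n := q • allOnes d - (d * q - 1) • EuclideanSpace.single j (1 : ℝ)
  have hn : ‖n‖ ^ 2 * d = (d - 2) ^ 2 := by
    rw [← real_inner_self_eq_norm_sq]
    simp only [n, inner_sub_left, inner_sub_right, real_inner_smul_left, real_inner_smul_right,
      inner_single_one_single_one, inner_single_one_allOnes, inner_allOnes_single_one,
      inner_allOnes_allOnes, if_pos]
    linear_combination (d - 1) * hq
  intro hequi
  have hlow := abs_mul_sub_one_le_altitude_apexSimplex_castSucc q j
  have hup := altitude_apexSimplex_last_sq_le hd0 q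
  rw [hequi j.castSucc (Fin.last d)] at hlow
  set a := altitude (apexSimplex d q) (Fin.last d)
  have hlow' : (d * q - 1) ^ 2 ≤ ‖n‖ ^ 2 * a ^ 2 := by
    simpa only [sq_abs, mul_pow] using pow_le_pow_left₀ (abs_nonneg _) hlow 2
  have hup' : d * a ^ 2 ≤ (d * q - 1) ^ 2 := (le_div_iff₀' (by linarith)).1 hup
  have key : d * d * (d * q - 1) ^ 2 ≤ (d - 2) ^ 2 * (d * q - 1) ^ 2 := by
    nlinarith [mul_le_mul_of_nonneg_left hup' (sq_nonneg ‖n‖)]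
  rw [hq] at key
  nlinarith

theorem equiradial_apexSimplex {q : ℝ} (hq : (d * q - 1) ^ 2 = d - 3) :
    Equiradial (apexSimplex d q) := by
  have hd : d ≠ 0 := by
    rintro rfl
    norm_num at hq
  exact ⟨_, fun j => Fin.lastCases (isFacetCircumradius_apexSimplex_last hd q)
    (isFacetCircumradius_apexSimplex_castSucc hq) j⟩

/-- Theorem 3.4. For every `d ≥ 4` there is a `d`-simplex
which is equiradial but not equiareal. -/
theorem statement10 (d : ℕ) (hd : 4 ≤ d) :
    ∃ A : Fin (d+1) → Pt d, AffineIndependent ℝ A ∧ Equiradial A ∧ ¬ Equiareal A := by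
  have hd' : (4 : ℝ) ≤ d := by exact_mod_cast hd
  set q : ℝ := (1 + √((d : ℝ) - 3)) / d
  have hdq : (d : ℝ) * q - 1 = √((d : ℝ) - 3) := by
    simp only [q]
    field_simp
    ring
  have hq : ((d : ℝ) * q - 1) ^ 2 = d - 3 := by
    rw [hdq, Real.sq_sqrt (by linarith)]
  have hq1 : (d : ℝ) * q ≠ 1 := by
    rw [← sub_ne_zero, hdq, Real.sqrt_ne_zero']
    linarith
  exact ⟨apexSimplex d q, affineIndependent_apexSimplex hq1, equiradial_apexSimplex hq,
    not_equiareal_apexSimplex hq hq1⟩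
end
end

section
/- There exists an equiareal 4-simplex in Euclidean 4-space whose centroid, circumcenter, and Fermat-Torricelli point are pairwise distinct. -/
/-
Common geometric notions for simplices in Euclidean d-space, following
Edmonds–Hajja–Martini, "Coincidences of simplex centers and related facial
structures".  A d-simplex is given by its d+1 affinely independent vertices
`A : Fin (d+1) → EuclideanSpace ℝ (Fin d)`.
-/

noncomputable section

variable {d : ℕ}

/-!
The example is `V₀ = 0`, `V₁,₂ = (±8h, 0, -4, h)`, `V₃,₄ = (0, ±8h, 4, h)` with `h = √239`.

In the family `V₁,₂ = (±a, 0, -b, h)`, `V₃,₄ = (0, ±a, b, h)` the facets opposite `V₀` and `V₁`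
have equal volume iff `a² (15 b² - h²) = 4 b² h²`; the choice `b = 4`, `h² = 239 = 15 · 16 - 1`
gives `a = 8h`, and by symmetry all five altitudes then equal `h`.

The simplex is symmetric about the `x₃`-axis, which therefore carries the centroid (at height
`4h/5`) and the circumcenter (at height `15551/(2h)`, since `|Vᵢ|² = 15551` for `i ≠ 0`).
The vertex `V₀` is the Fermat-Torricelli point: the unit vectors `uᵢ` from `V₀` towards the other
vertices sum to a vector of length `4h/√15551 < 1`, and Cauchy-Schwarz gives
`∑ |Q - Vᵢ| ≥ ∑ |V₀ - Vᵢ| + (1 - |∑ uᵢ|) |Q - V₀|` for every `Q`.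
-/

open RealInnerProductSpace EuclideanGeometry

section

variable {V P : Type*} [NormedAddCommGroup V] [InnerProductSpace ℝ V] [MetricSpace P]
  [NormedAddTorsor V P]

theorem infDist_eq_dist_of_vsub_mem_direction_orthogonal {s : AffineSubspace ℝ P}
    [s.direction.HasOrthogonalProjection] {x p : P} (hp : p ∈ s)
    (hx : x -ᵥ p ∈ s.directionᗮ) : Metric.infDist x s = dist x p := by
  have : Nonempty s := ⟨⟨p, hp⟩⟩
  rw [← dist_orthogonalProjection_eq_infDist, coe_orthogonalProjection_eq_iff_mem.2 ⟨hp, hx⟩]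

theorem mem_orthogonal_direction_affineSpan {S : Set P} {v : V} {q : P}
    (h : ∀ y ∈ S, ⟪v, y -ᵥ q⟫ = 0) : v ∈ (affineSpan ℝ S).directionᗮ := by
  have hle : affineSpan ℝ S ≤ AffineSubspace.mk' q (ℝ ∙ v)ᗮ := by
    refine affineSpan_le.2 fun y hy => ?_
    rw [SetLike.mem_coe, AffineSubspace.mem_mk',
      Submodule.mem_orthogonal_singleton_iff_inner_right]
    exact h y hy
  refine (Submodule.mem_orthogonal _ _).2 fun u hu => ?_
  have hu' := AffineSubspace.direction_le hle hu
  rw [AffineSubspace.direction_mk', Submodule.mem_orthogonal_singleton_iff_inner_right] at hu'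
  rwa [real_inner_comm]

theorem sum_smul_mem_affineSpan_image {ι : Type*} [Fintype ι] {A : ι → V} {j : ι} {w : ι → ℝ}
    (hw : ∑ i, w i = 1) (hwj : w j = 0) : ∑ i, w i • A i ∈ affineSpan ℝ (A '' {i | i ≠ j}) := by
  rw [← Finset.univ.affineCombination_eq_linear_combination A w hw]
  exact affineCombination_mem_affineSpan_image hw (fun i _ hi => by simp_all) A

theorem dist_le_dist_add_inner_unit (F Q a : V) :
    dist F a ≤ dist Q a + ⟪‖a - F‖⁻¹ • (a - F), Q - F⟫ := by
  set u := ‖a - F‖⁻¹ • (a - F)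
  have hu : ‖u‖ ≤ 1 := by
    rw [norm_smul, norm_inv, norm_norm]
    exact inv_mul_le_one_of_le₀ le_rfl (norm_nonneg _)
  have hself : ⟪u, a - F⟫ = ‖a - F‖ := by
    rw [real_inner_smul_left, real_inner_self_eq_norm_sq]
    rcases (norm_nonneg (a - F)).eq_or_lt with h | h
    · simp [← h]
    · field_simp
  have hcs : ⟪u, a - Q⟫ ≤ ‖a - Q‖ :=
    (real_inner_le_norm _ _).trans (mul_le_of_le_one_left (norm_nonneg _) hu)
  have hsplit : a - F = (a - Q) + (Q - F) := by abel
  rw [dist_comm, dist_eq_norm, dist_comm, dist_eq_norm, ← hself, hsplit, inner_add_right]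
  linarith

theorem sum_dist_le_sum_dist_add {ι : Type*} (s : Finset ι) (a : ι → V) (F Q : V) :
    ∑ i ∈ s, dist F (a i) ≤
      ∑ i ∈ s, dist Q (a i) + ‖∑ i ∈ s, ‖a i - F‖⁻¹ • (a i - F)‖ * dist Q F :=
  calc ∑ i ∈ s, dist F (a i)
      ≤ ∑ i ∈ s, (dist Q (a i) + ⟪‖a i - F‖⁻¹ • (a i - F), Q - F⟫) :=
        Finset.sum_le_sum fun i _ => dist_le_dist_add_inner_unit F Q (a i)
    _ = ∑ i ∈ s, dist Q (a i) + ⟪∑ i ∈ s, ‖a i - F‖⁻¹ • (a i - F), Q - F⟫ := by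
        rw [Finset.sum_add_distrib, sum_inner]
    _ ≤ _ := by
        rw [dist_eq_norm]
        gcongr
        exact real_inner_le_norm _ _

end

theorem altitude_eq_dist {A : Fin (d+1) → Pt d} {j : Fin (d+1)} {p : Pt d}
    (hp : p ∈ affineSpan ℝ (A '' {i | i ≠ j})) (hperp : ∀ i ≠ j, ⟪A j - p, A i - p⟫ = 0) :
    altitude A j = dist (A j) p := by
  refine infDist_eq_dist_of_vsub_mem_direction_orthogonal hp
    (mem_orthogonal_direction_affineSpan (q := p) ?_)
  rintro _ ⟨i, hi, rfl⟩
  exact hperp i hi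

-- The term `i = j` of the sum is `‖0‖⁻¹ • 0 = 0`.
theorem isFermatPoint_of_norm_sum_le_one {A : Fin (d+1) → Pt d} {j : Fin (d+1)}
    (h : ‖∑ i, ‖A i - A j‖⁻¹ • (A i - A j)‖ ≤ 1) : IsFermatPoint A (A j) := by
  intro Q
  have key := sum_dist_le_sum_dist_add (Finset.univ.erase j) A (A j) Q
  rw [Finset.sum_erase (f := fun i => ‖A i - A j‖⁻¹ • (A i - A j)) _ (by simp)] at key
  rw [← Finset.add_sum_erase _ _ (Finset.mem_univ j),
    ← Finset.add_sum_erase _ _ (Finset.mem_univ j), dist_self]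
  nlinarith [dist_nonneg (x := Q) (y := A j)]

namespace EquiarealExample

def h : ℝ := √239

theorem h_sq : h ^ 2 = 239 := Real.sq_sqrt (by norm_num)

theorem h_pos : 0 < h := Real.sqrt_pos.2 (by norm_num)

def onAxis (t : ℝ) : Pt 4 := !₂[0, 0, 0, t]

theorem onAxis_injective : Function.Injective onAxis := fun s t hst => by
  simpa [onAxis] using congrArg (· 3) hst

theorem onAxis_zero : onAxis 0 = 0 := by
  ext k; fin_cases k <;> rfl

theorem norm_onAxis (t : ℝ) : ‖onAxis t‖ = |t| := by
  simp [EuclideanSpace.norm_eq, onAxis, Fin.sum_univ_four, Real.sqrt_sq_eq_abs]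

def vertex : Fin 5 → Pt 4 :=
  ![onAxis 0, !₂[8 * h, 0, -4, h], !₂[-8 * h, 0, -4, h], !₂[0, 8 * h, 4, h], !₂[0, -8 * h, 4, h]]

theorem affineIndependent_vertex : AffineIndependent ℝ vertex := by
  rw [affineIndependent_iff_of_fintype]
  intro w hw0 hw
  rw [Finset.weightedVSub_eq_linear_combination _ hw0] at hw
  have hc : ∀ k, (∑ i, w i • vertex i) k = 0 := fun k => by rw [hw]; rfl
  have e0 := hc 0
  have e1 := hc 1
  have e2 := hc 2
  have e3 := hc 3
  simp [vertex, onAxis, Fin.sum_univ_five] at e0 e1 e2 e3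
  have h12 : w 1 = w 2 := by
    have : 8 * h * (w 1 - w 2) = 0 := by linear_combination e0
    simpa [h_pos.ne', sub_eq_zero] using this
  have h34 : w 3 = w 4 := by
    have : 8 * h * (w 3 - w 4) = 0 := by linear_combination e1
    simpa [h_pos.ne', sub_eq_zero] using this
  have hsum : w 1 + w 2 + w 3 + w 4 = 0 := by
    have : h * (w 1 + w 2 + w 3 + w 4) = 0 := by linear_combination e3
    simpa [h_pos.ne'] using this
  rw [Fin.sum_univ_five] at hw0
  intro i
  fin_cases i <;> simp <;> linarith

def foot : Fin 5 → Pt 4 :=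
  ![onAxis h, !₂[127 * h / 16, 0, 175 / 16, 3 * h / 4], !₂[-127 * h / 16, 0, 175 / 16, 3 * h / 4],
    !₂[0, 127 * h / 16, -175 / 16, 3 * h / 4], !₂[0, -127 * h / 16, -175 / 16, 3 * h / 4]]

def footWeight : Fin 5 → Fin 5 → ℝ :=
  ![![0, 1/4, 1/4, 1/4, 1/4], ![1/4, 0, -127/128, 223/256, 223/256],
    ![1/4, -127/128, 0, 223/256, 223/256], ![1/4, 223/256, 223/256, 0, -127/128],
    ![1/4, 223/256, 223/256, -127/128, 0]]

theorem foot_eq_sum (j : Fin 5) : foot j = ∑ i, footWeight j i • vertex i := by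
  ext k
  fin_cases j <;> fin_cases k <;>
    simp [foot, footWeight, vertex, onAxis, Fin.sum_univ_five] <;> ring

theorem foot_mem_affineSpan (j : Fin 5) : foot j ∈ affineSpan ℝ (vertex '' {i | i ≠ j}) := by
  rw [foot_eq_sum]
  refine sum_smul_mem_affineSpan_image ?_ ?_ <;> fin_cases j <;>
    simp [footWeight, Fin.sum_univ_five] <;> norm_num

theorem inner_vertex_sub_foot (j i : Fin 5) (hij : i ≠ j) :
    ⟪vertex j - foot j, vertex i - foot j⟫ = 0 := by
  fin_cases j <;> fin_cases i <;> simp at hij <;>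
    simp [foot, vertex, onAxis, PiLp.inner_apply, Fin.sum_univ_four] <;> ring_nf <;>
    norm_num [h_sq]

theorem dist_vertex_foot (j : Fin 5) : dist (vertex j) (foot j) = h := by
  rw [EuclideanSpace.dist_eq, Real.sqrt_eq_iff_eq_sq (by positivity) h_pos.le]
  fin_cases j <;> simp [foot, vertex, onAxis, Fin.sum_univ_four, Real.dist_eq, sq_abs] <;>
    ring_nf <;> norm_num [h_sq]

theorem altitude_vertex (j : Fin 5) : altitude vertex j = h := by
  rw [altitude_eq_dist (foot_mem_affineSpan j) (inner_vertex_sub_foot j), dist_vertex_foot]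

theorem equiareal_vertex : Equiareal vertex := fun j k => by
  rw [altitude_vertex, altitude_vertex]

theorem sum_vertex : ∑ i, vertex i = onAxis (4 * h) := by
  ext k; fin_cases k <;> simp [vertex, onAxis, Fin.sum_univ_five]; ring

theorem ctr_vertex : ctr vertex = onAxis (4 * h / 5) := by
  rw [ctr, Finset.centroid_def,
    Finset.affineCombination_eq_linear_combination _ _ _ (by simp [Finset.centroidWeights_apply])]
  simp only [Finset.centroidWeights_apply, Finset.card_univ, Fintype.card_fin]
  rw [← Finset.smul_sum, sum_vertex]
  ext k; fin_cases k <;> simp [onAxis]; ring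

def circumcenter : Pt 4 := onAxis (15551 / (2 * h))

theorem dist_circumcenter_vertex (i : Fin 5) :
    dist circumcenter (vertex i) = 15551 / (2 * h) := by
  have hc : h * (15551 / (2 * h)) = 15551 / 2 := by field_simp [h_pos.ne']
  rw [circumcenter, EuclideanSpace.dist_eq,
    Real.sqrt_eq_iff_eq_sq (by positivity) (div_pos (by norm_num) (by linarith [h_pos])).le]
  fin_cases i <;> simp [vertex, onAxis, Fin.sum_univ_four, Real.dist_eq, sq_abs]
  all_goals linear_combination 65 * h_sq - 2 * hc

theorem norm_vertex {i : Fin 5} (hi : i ≠ 0) : ‖vertex i‖ = √15551 := by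
  rw [EuclideanSpace.norm_eq]
  congr 1
  fin_cases i <;> simp at hi <;> simp [vertex, Fin.sum_univ_four] <;> ring_nf <;> norm_num [h_sq]

theorem isFermatPoint_vertex : IsFermatPoint vertex (vertex 0) := by
  refine isFermatPoint_of_norm_sum_le_one ?_
  have hv0 : vertex 0 = 0 := onAxis_zero
  have hunit : ∀ i, ‖vertex i - vertex 0‖⁻¹ • (vertex i - vertex 0) = (√15551)⁻¹ • vertex i := by
    intro i
    rcases eq_or_ne i 0 with rfl | hi
    · simp [hv0]
    · rw [hv0, sub_zero, norm_vertex hi]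
  have h4 : 0 < 4 * h := by linarith [h_pos]
  rw [Finset.sum_congr rfl fun i _ => hunit i, ← Finset.smul_sum, sum_vertex, norm_smul,
    norm_onAxis, norm_inv, Real.norm_of_nonneg (Real.sqrt_nonneg _), abs_of_pos h4,
    inv_mul_le_one₀ (by positivity), Real.le_sqrt' h4]
  nlinarith [h_sq]

end EquiarealExample

open EquiarealExample in
/-- Theorem 4.3. There is an equiareal 4-simplex whose
centroid, circumcenter and Fermat-Torricelli point are pairwise distinct. -/
theorem statement13 :
    ∃ A : Fin 5 → Pt 4, AffineIndependent ℝ A ∧ Equiareal A ∧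
      ∃ C F : Pt 4, IsCircumcenter A C ∧ IsFermatPoint A F ∧
        ctr A ≠ C ∧ C ≠ F ∧ ctr A ≠ F := by
  have h2 : 0 < 2 * h := by linarith [h_pos]
  refine ⟨vertex, affineIndependent_vertex, equiareal_vertex, circumcenter, vertex 0,
    ⟨_, dist_circumcenter_vertex⟩, isFermatPoint_vertex, ?_, onAxis_injective.ne ?_, ?_⟩
  · rw [ctr_vertex]
    refine onAxis_injective.ne ?_
    rw [Ne, div_eq_div_iff (by norm_num) h2.ne']
    nlinarith [h_sq]
  · exact (div_pos (by norm_num) h2).ne'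
  · rw [ctr_vertex]
    exact onAxis_injective.ne (div_pos (by linarith [h_pos]) (by norm_num)).ne'
end
end

section
/- Let D be a triangle in the Euclidean plane with side lengths a, b, c, circumradius R, and all interior angles at most π/2 (acute or right). Then (a^2 + b^2 + c^2)/8 ≥ R^2 ≥ (a^2 + b^2 + c^2)/9. Equality holds on the left if and only if D is right-angled, and on the right if and only if D is equilateral. -/
/-
Common geometric notions for simplices in Euclidean d-space, following
Edmonds–Hajja–Martini, "Coincidences of simplex centers and related facial
structures".  A d-simplex is given by its d+1 affinely independent vertices
`A : Fin (d+1) → EuclideanSpace ℝ (Fin d)`.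
-/

noncomputable section

variable {d : ℕ}

open EuclideanGeometry Real
open scoped RealInnerProductSpace
set_option maxHeartbeats 1000000

/-- Lemma 4.5. Let `D = [P, Q, R']` be a triangle in the
Euclidean plane with side lengths `a, b, c`, circumradius `R`, and all interior
angles at most `π/2`.  Then `(a² + b² + c²)/8 ≥ R² ≥ (a² + b² + c²)/9`, with
equality on the left iff `D` is right-angled and on the right iff `D` is
equilateral. -/
theorem statement15 (P Q R' : Pt 2) (hD : AffineIndependent ℝ ![P, Q, R'])
    (a b c R : ℝ)
    (ha : a = dist Q R') (hb : b = dist P R') (hc : c = dist P Q)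
    (O : Pt 2) (hO : dist O P = R ∧ dist O Q = R ∧ dist O R' = R)
    (hangle : ∠ Q P R' ≤ π / 2 ∧ ∠ P Q R' ≤ π / 2 ∧ ∠ P R' Q ≤ π / 2) :
    (a ^ 2 + b ^ 2 + c ^ 2) / 8 ≥ R ^ 2 ∧ R ^ 2 ≥ (a ^ 2 + b ^ 2 + c ^ 2) / 9 ∧
    ((a ^ 2 + b ^ 2 + c ^ 2) / 8 = R ^ 2 ↔
      (∠ Q P R' = π / 2 ∨ ∠ P Q R' = π / 2 ∨ ∠ P R' Q = π / 2)) ∧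
    (R ^ 2 = (a ^ 2 + b ^ 2 + c ^ 2) / 9 ↔ (a = b ∧ b = c)) := by
  obtain ⟨hOP, hOQ, hOR⟩ := hO
  obtain ⟨hA1, hA2, hA3⟩ := hangle
  have hInj := hD.injective
  have hPQ : P ≠ Q := by
    intro h
    have h01 : (0 : Fin 3) = 1 := hInj (by simpa using h)
    simp at h01
  have hPR : P ≠ R' := by
    intro h
    have h02 : (0 : Fin 3) = 2 := hInj (by simpa using h)
    simp at h02
  have hQR : Q ≠ R' := by
    intro h
    have h12 : (1 : Fin 3) = 2 := hInj (by simpa using h)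
    simp at h12
  have ha0 : 0 < a := ha ▸ dist_pos.2 hQR
  have hb0 : 0 < b := hb ▸ dist_pos.2 hPR
  have hc0 : 0 < c := hc ▸ dist_pos.2 hPQ
  have hRnn : 0 ≤ R := hOP ▸ dist_nonneg
  have hR0 : 0 < R := by
    rcases hRnn.lt_or_eq with h | h
    · exact h
    · exfalso
      apply hPQ
      have h1 : O = P := dist_eq_zero.mp (by rw [hOP, ← h])
      have h2 : O = Q := dist_eq_zero.mp (by rw [hOQ, ← h])
      rw [← h1, h2]
  -- vectors
  have hnu : ‖P - O‖ = R := by rw [← dist_eq_norm, dist_comm]; exact hOP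
  have hnv : ‖Q - O‖ = R := by rw [← dist_eq_norm, dist_comm]; exact hOQ
  have hnw : ‖R' - O‖ = R := by rw [← dist_eq_norm, dist_comm]; exact hOR
  have huu : ⟪P - O, P - O⟫ = R ^ 2 := by rw [real_inner_self_eq_norm_sq, hnu]
  have hvv : ⟪Q - O, Q - O⟫ = R ^ 2 := by rw [real_inner_self_eq_norm_sq, hnv]
  have hww : ⟪R' - O, R' - O⟫ = R ^ 2 := by rw [real_inner_self_eq_norm_sq, hnw]
  have hpv : ⟪P - O, Q - O⟫ = R ^ 2 - c ^ 2 / 2 := by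
    have h1 : (P - O) - (Q - O) = P - Q := by abel
    have h2 := norm_sub_sq_real (P - O) (Q - O)
    rw [h1, ← dist_eq_norm, ← hc, hnu, hnv] at h2
    linarith
  have hvw : ⟪Q - O, R' - O⟫ = R ^ 2 - a ^ 2 / 2 := by
    have h1 : (Q - O) - (R' - O) = Q - R' := by abel
    have h2 := norm_sub_sq_real (Q - O) (R' - O)
    rw [h1, ← dist_eq_norm, ← ha, hnv, hnw] at h2
    linarith
  have hwu : ⟪R' - O, P - O⟫ = R ^ 2 - b ^ 2 / 2 := by
    have h1 : (R' - O) - (P - O) = R' - P := by abel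
    have h2 := norm_sub_sq_real (R' - O) (P - O)
    rw [h1, ← dist_eq_norm, dist_comm R' P, ← hb, hnw, hnu] at h2
    linarith
  have hvu : ⟪Q - O, P - O⟫ = R ^ 2 - c ^ 2 / 2 := by rw [real_inner_comm]; exact hpv
  have hwv : ⟪R' - O, Q - O⟫ = R ^ 2 - a ^ 2 / 2 := by rw [real_inner_comm]; exact hvw
  have huw : ⟪P - O, R' - O⟫ = R ^ 2 - b ^ 2 / 2 := by rw [real_inner_comm]; exact hwu
  -- linear dependence of the three radius vectors in the plane
  have hnli : ¬ LinearIndependent ℝ ![P - O, Q - O, R' - O] := by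
    intro h
    have h2 := h.fintype_card_le_finrank
    simp [finrank_euclideanSpace] at h2
  obtain ⟨g, hg0, i, hgi⟩ := Fintype.not_linearIndependent_iff.mp hnli
  have hrel : g 0 • (P - O) + g 1 • (Q - O) + g 2 • (R' - O) = 0 := by
    simpa [Fin.sum_univ_three] using hg0
  have e1 : g 0 * R ^ 2 + g 1 * (R ^ 2 - c ^ 2 / 2) + g 2 * (R ^ 2 - b ^ 2 / 2) = 0 := by
    have h3 : ⟪g 0 • (P - O) + g 1 • (Q - O) + g 2 • (R' - O), P - O⟫ = 0 := by
      rw [hrel]; exact inner_zero_left _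
    rw [inner_add_left, inner_add_left, real_inner_smul_left, real_inner_smul_left,
      real_inner_smul_left, huu, hvu, hwu] at h3
    linarith
  have e2 : g 0 * (R ^ 2 - c ^ 2 / 2) + g 1 * R ^ 2 + g 2 * (R ^ 2 - a ^ 2 / 2) = 0 := by
    have h3 : ⟪g 0 • (P - O) + g 1 • (Q - O) + g 2 • (R' - O), Q - O⟫ = 0 := by
      rw [hrel]; exact inner_zero_left _
    rw [inner_add_left, inner_add_left, real_inner_smul_left, real_inner_smul_left,
      real_inner_smul_left, hpv, hvv, hwv] at h3
    linarith
  have e3 : g 0 * (R ^ 2 - b ^ 2 / 2) + g 1 * (R ^ 2 - a ^ 2 / 2) + g 2 * R ^ 2 = 0 := by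
    have h3 : ⟪g 0 • (P - O) + g 1 • (Q - O) + g 2 • (R' - O), R' - O⟫ = 0 := by
      rw [hrel]; exact inner_zero_left _
    rw [inner_add_left, inner_add_left, real_inner_smul_left, real_inner_smul_left,
      real_inner_smul_left, huw, hvw, hww] at h3
    linarith
  -- the Gram determinant relation
  have hgram : a ^ 2 * b ^ 2 * c ^ 2 =
      R ^ 2 * (2 * a ^ 2 * b ^ 2 + 2 * a ^ 2 * c ^ 2 + 2 * b ^ 2 * c ^ 2
        - a ^ 4 - b ^ 4 - c ^ 4) := by
    have key : ∀ z : ℝ, (a ^ 2 * b ^ 2 * c ^ 2 -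
        R ^ 2 * (2 * a ^ 2 * b ^ 2 + 2 * a ^ 2 * c ^ 2 + 2 * b ^ 2 * c ^ 2
          - a ^ 4 - b ^ 4 - c ^ 4)) * z = 0 → z ≠ 0 →
        a ^ 2 * b ^ 2 * c ^ 2 =
          R ^ 2 * (2 * a ^ 2 * b ^ 2 + 2 * a ^ 2 * c ^ 2 + 2 * b ^ 2 * c ^ 2
            - a ^ 4 - b ^ 4 - c ^ 4) := by
      intro z hz hz0
      rcases mul_eq_zero.mp hz with h | h
      · linarith
      · exact absurd h hz0
    fin_cases i
    · refine key (g 0) ?_ hgi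
      linear_combination (a ^ 4 - 4 * a ^ 2 * R ^ 2) * e1 +
        (2 * a ^ 2 * R ^ 2 + 2 * b ^ 2 * R ^ 2 - 2 * c ^ 2 * R ^ 2 - a ^ 2 * b ^ 2) * e2 +
        (2 * c ^ 2 * R ^ 2 + 2 * a ^ 2 * R ^ 2 - 2 * b ^ 2 * R ^ 2 - a ^ 2 * c ^ 2) * e3
    · refine key (g 1) ?_ hgi
      linear_combination
        (2 * a ^ 2 * R ^ 2 + 2 * b ^ 2 * R ^ 2 - 2 * c ^ 2 * R ^ 2 - a ^ 2 * b ^ 2) * e1 +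
        (b ^ 4 - 4 * b ^ 2 * R ^ 2) * e2 +
        (2 * c ^ 2 * R ^ 2 + 2 * b ^ 2 * R ^ 2 - 2 * a ^ 2 * R ^ 2 - b ^ 2 * c ^ 2) * e3
    · refine key (g 2) ?_ hgi
      linear_combination
        (2 * c ^ 2 * R ^ 2 + 2 * a ^ 2 * R ^ 2 - 2 * b ^ 2 * R ^ 2 - a ^ 2 * c ^ 2) * e1 +
        (2 * c ^ 2 * R ^ 2 + 2 * b ^ 2 * R ^ 2 - 2 * a ^ 2 * R ^ 2 - b ^ 2 * c ^ 2) * e2 +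
        (c ^ 4 - 4 * c ^ 2 * R ^ 2) * e3
  -- main identity
  have hkey : R ^ 2 * ((b ^ 2 + c ^ 2 - a ^ 2) * (a ^ 2 + c ^ 2 - b ^ 2) *
      (a ^ 2 + b ^ 2 - c ^ 2)) =
      (a ^ 2 + b ^ 2 + c ^ 2 - 8 * R ^ 2) * (a ^ 2 * b ^ 2 * c ^ 2) := by
    linear_combination (-(a ^ 2 + b ^ 2 + c ^ 2)) * hgram
  -- law of cosines
  have lcP : a ^ 2 = c ^ 2 + b ^ 2 - 2 * c * b * Real.cos (∠ Q P R') := by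
    have h2 := EuclideanGeometry.law_cos Q P R'
    rw [dist_comm Q P, dist_comm R' P, ← ha, ← hb, ← hc] at h2
    linear_combination h2
  have lcQ : b ^ 2 = c ^ 2 + a ^ 2 - 2 * c * a * Real.cos (∠ P Q R') := by
    have h2 := EuclideanGeometry.law_cos P Q R'
    rw [dist_comm R' Q, ← ha, ← hb, ← hc] at h2
    linear_combination h2
  have lcR : c ^ 2 = b ^ 2 + a ^ 2 - 2 * b * a * Real.cos (∠ P R' Q) := by
    have h2 := EuclideanGeometry.law_cos P R' Q
    rw [← ha, ← hb, ← hc] at h2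
    linear_combination h2
  have hcosP : 0 ≤ Real.cos (∠ Q P R') :=
    Real.cos_nonneg_of_mem_Icc ⟨by linarith [angle_nonneg Q P R', Real.pi_pos], hA1⟩
  have hcosQ : 0 ≤ Real.cos (∠ P Q R') :=
    Real.cos_nonneg_of_mem_Icc ⟨by linarith [angle_nonneg P Q R', Real.pi_pos], hA2⟩
  have hcosR : 0 ≤ Real.cos (∠ P R' Q) :=
    Real.cos_nonneg_of_mem_Icc ⟨by linarith [angle_nonneg P R' Q, Real.pi_pos], hA3⟩
  have hA : 0 ≤ b ^ 2 + c ^ 2 - a ^ 2 := by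
    linarith [lcP, mul_nonneg (mul_nonneg hc0.le hb0.le) hcosP]
  have hB : 0 ≤ a ^ 2 + c ^ 2 - b ^ 2 := by
    linarith [lcQ, mul_nonneg (mul_nonneg hc0.le ha0.le) hcosQ]
  have hC : 0 ≤ a ^ 2 + b ^ 2 - c ^ 2 := by
    linarith [lcR, mul_nonneg (mul_nonneg hb0.le ha0.le) hcosR]
  have habc : 0 < a ^ 2 * b ^ 2 * c ^ 2 := by positivity
  have hprod : 0 ≤ R ^ 2 * ((b ^ 2 + c ^ 2 - a ^ 2) * (a ^ 2 + c ^ 2 - b ^ 2) *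
      (a ^ 2 + b ^ 2 - c ^ 2)) :=
    mul_nonneg (sq_nonneg R) (mul_nonneg (mul_nonneg hA hB) hC)
  -- sum of the three radius vectors
  have hsum : ‖(P - O) + (Q - O) + (R' - O)‖ ^ 2 =
      9 * R ^ 2 - (a ^ 2 + b ^ 2 + c ^ 2) := by
    have h4 : ‖(P - O) + (Q - O) + (R' - O)‖ ^ 2 =
        ⟪(P - O) + (Q - O) + (R' - O), (P - O) + (Q - O) + (R' - O)⟫ :=
      (real_inner_self_eq_norm_sq _).symm
    rw [h4]
    simp only [inner_add_left, inner_add_right]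
    rw [huu, hvv, hww, hpv, hvu, hvw, hwv, hwu, huw]
    ring
  have hnormnn := sq_nonneg ‖(P - O) + (Q - O) + (R' - O)‖
  have angle_eq : ∀ θ : ℝ, 0 ≤ θ → θ ≤ π → Real.cos θ = 0 → θ = π / 2 := by
    intro θ h1 h2 h3
    have hpi := Real.pi_pos
    exact Real.injOn_cos ⟨h1, h2⟩ ⟨by positivity, by linarith⟩
      (by rw [h3, Real.cos_pi_div_two])
  refine ⟨?_, ?_, ⟨?_, ?_⟩, ⟨?_, ?_⟩⟩
  · have h8 : 0 ≤ (a ^ 2 + b ^ 2 + c ^ 2 - 8 * R ^ 2) * (a ^ 2 * b ^ 2 * c ^ 2) := by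
      rw [← hkey]; exact hprod
    have h9 : 0 ≤ a ^ 2 + b ^ 2 + c ^ 2 - 8 * R ^ 2 := by
      by_contra h'
      push_neg at h'
      exact absurd h8 (not_le.mpr (mul_neg_of_neg_of_pos h' habc))
    linarith
  · linarith [hsum, hnormnn]
  · -- equality left → right angle
    intro h
    have h8 : a ^ 2 + b ^ 2 + c ^ 2 - 8 * R ^ 2 = 0 := by linarith
    have h0 : R ^ 2 * ((b ^ 2 + c ^ 2 - a ^ 2) * (a ^ 2 + c ^ 2 - b ^ 2) *
        (a ^ 2 + b ^ 2 - c ^ 2)) = 0 := by rw [hkey, h8, zero_mul]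
    have hR2 : (R : ℝ) ^ 2 ≠ 0 := by positivity
    have h1 : (b ^ 2 + c ^ 2 - a ^ 2) * (a ^ 2 + c ^ 2 - b ^ 2) *
        (a ^ 2 + b ^ 2 - c ^ 2) = 0 := (mul_eq_zero.mp h0).resolve_left hR2
    rcases mul_eq_zero.mp h1 with h2 | h2
    · rcases mul_eq_zero.mp h2 with h3 | h3
      · left
        have h5 : (2 * c * b) * Real.cos (∠ Q P R') = 0 := by linarith
        have hcos : Real.cos (∠ Q P R') = 0 :=
          (mul_eq_zero.mp h5).resolve_left (by positivity)
        exact angle_eq _ (angle_nonneg Q P R') (angle_le_pi Q P R') hcos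
      · right; left
        have h5 : (2 * c * a) * Real.cos (∠ P Q R') = 0 := by linarith
        have hcos : Real.cos (∠ P Q R') = 0 :=
          (mul_eq_zero.mp h5).resolve_left (by positivity)
        exact angle_eq _ (angle_nonneg P Q R') (angle_le_pi P Q R') hcos
    · right; right
      have h5 : (2 * b * a) * Real.cos (∠ P R' Q) = 0 := by linarith
      have hcos : Real.cos (∠ P R' Q) = 0 :=
        (mul_eq_zero.mp h5).resolve_left (by positivity)
      exact angle_eq _ (angle_nonneg P R' Q) (angle_le_pi P R' Q) hcos
  · -- right angle → equality left
    intro h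
    have hfac : (b ^ 2 + c ^ 2 - a ^ 2) * (a ^ 2 + c ^ 2 - b ^ 2) *
        (a ^ 2 + b ^ 2 - c ^ 2) = 0 := by
      rcases h with h | h | h
      · have hcos : Real.cos (∠ Q P R') = 0 := by rw [h, Real.cos_pi_div_two]
        rw [hcos] at lcP
        have h3 : b ^ 2 + c ^ 2 - a ^ 2 = 0 := by linarith
        rw [h3, zero_mul, zero_mul]
      · have hcos : Real.cos (∠ P Q R') = 0 := by rw [h, Real.cos_pi_div_two]
        rw [hcos] at lcQ
        have h3 : a ^ 2 + c ^ 2 - b ^ 2 = 0 := by linarith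
        rw [h3, mul_zero, zero_mul]
      · have hcos : Real.cos (∠ P R' Q) = 0 := by rw [h, Real.cos_pi_div_two]
        rw [hcos] at lcR
        have h3 : a ^ 2 + b ^ 2 - c ^ 2 = 0 := by linarith
        rw [h3, mul_zero]
    have h0 : (a ^ 2 + b ^ 2 + c ^ 2 - 8 * R ^ 2) * (a ^ 2 * b ^ 2 * c ^ 2) = 0 := by
      rw [← hkey, hfac, mul_zero]
    have h8 : a ^ 2 + b ^ 2 + c ^ 2 - 8 * R ^ 2 = 0 :=
      (mul_eq_zero.mp h0).resolve_right (ne_of_gt habc)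
    linarith
  · -- equality right → equilateral
    intro h
    have hz : ‖(P - O) + (Q - O) + (R' - O)‖ ^ 2 = 0 := by rw [hsum]; linarith
    have hz1 : ‖(P - O) + (Q - O) + (R' - O)‖ = 0 := by
      exact pow_eq_zero_iff (n := 2) (by norm_num) |>.mp hz
    have hz0 : (P - O) + (Q - O) + (R' - O) = 0 := norm_eq_zero.mp hz1
    have q1 : ⟪(P - O) + (Q - O) + (R' - O), P - O⟫ = 0 := by
      rw [hz0]; exact inner_zero_left _
    have q2 : ⟪(P - O) + (Q - O) + (R' - O), Q - O⟫ = 0 := by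
      rw [hz0]; exact inner_zero_left _
    rw [inner_add_left, inner_add_left, huu, hvu, hwu] at q1
    rw [inner_add_left, inner_add_left, hpv, hvv, hwv] at q2
    have q3 : ⟪(P - O) + (Q - O) + (R' - O), R' - O⟫ = 0 := by
      rw [hz0]; exact inner_zero_left _
    rw [inner_add_left, inner_add_left, huw, hvw, hww] at q3
    have hab2 : a ^ 2 = b ^ 2 := by linarith
    have hbc2 : b ^ 2 = c ^ 2 := by linarith
    constructor
    · have : (a - b) * (a + b) = 0 := by linear_combination hab2
      rcases mul_eq_zero.mp this with h' | h'
      · linarith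
      · linarith
    · have : (b - c) * (b + c) = 0 := by linear_combination hbc2
      rcases mul_eq_zero.mp this with h' | h'
      · linarith
      · linarith
  · -- equilateral → equality right
    rintro ⟨hab, hbc⟩
    rw [hab, hbc] at hgram ⊢
    have h7 : c ^ 4 * (c ^ 2 - 3 * R ^ 2) = 0 := by linear_combination hgram
    have hc4 : (c : ℝ) ^ 4 ≠ 0 := by positivity
    have h8 : c ^ 2 - 3 * R ^ 2 = 0 := (mul_eq_zero.mp h7).resolve_left hc4
    linarith
end
end

section
/- Let S = [A_1, …, A_{d+1}] be a d-simplex in Euclidean d-space. For an interior point P of S, the cevian through A_j relative to P is the segment from A_j to the point where the line through A_j and P meets the opposite facet. Then the following are equivalent: (1) the centroid and the circumcenter of S coincide; (2) the d+1 cevians through the centroid (i.e., the medians from each vertex to the centroid of the opposite facet) all have equal length; (3) the d+1 cevians through the Fermat-Torricelli point all have equal length; (4) the circumcenter lies in S and the d+1 cevians through the circumcenter all have equal length. -/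
/-
Common geometric notions for simplices in Euclidean d-space, following
Edmonds–Hajja–Martini, "Coincidences of simplex centers and related facial
structures".  A d-simplex is given by its d+1 affinely independent vertices
`A : Fin (d+1) → EuclideanSpace ℝ (Fin d)`.
-/

noncomputable section

variable {d : ℕ}

/-- `Q` is the foot of the cevian through vertex `A j` relative to the point `P`:
`Q` is the point where the line through `A j` and `P` meets the (affine span of
the) opposite facet. -/
def IsCevianFoot (A : Fin (d+1) → Pt d) (j : Fin (d+1)) (P Q : Pt d) : Prop :=
  Collinear ℝ ({A j, P, Q} : Set (Pt d)) ∧ Q ∈ affineSpan ℝ (A '' {i | i ≠ j})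

/-- All `d+1` cevians through `P` exist and have equal lengths. -/
def EqualCevians (A : Fin (d+1) → Pt d) (P : Pt d) : Prop :=
  ∃ L : ℝ, ∀ j, ∃ Q, IsCevianFoot A j P Q ∧ dist (A j) Q = L


/-
In barycentric coordinates `λ` with respect to the vertices, a point `Q` on the line through
`A j` and `P` lies on the opposite facet exactly when `λ j Q = 0`, and then
`dist (A j) P = |1 - λ j P| * dist (A j) Q`. So if all cevians through `P` have length `L`,
then `dist P (A j) = |1 - λ j P| * L` for every `j`; once the coordinates of `P` agree, `P` is
the centroid and it is equidistant from the vertices.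

For a circumcenter `C` in `S` the left-hand side is the circumradius, so all `λ j C` agree. At
an interior Fermat-Torricelli point `F` the unit vectors from the vertices to `F` sum to zero,
so `λ j F` is proportional to `1 / dist F (A j)`. Hence `λ j F * (1 - λ j F)` does not depend
on `j`, and since any two coordinates sum to less than `1` when `d ≥ 2`, they all agree.

Conversely, if the centroid `G` is equidistant (at distance `r`) from the vertices, the medians
are `(d + 1) / d * r` long, and `G` is a Fermat-Torricelli point: the vectors `A i - G` sum to
zero, so by Cauchy-Schwarz
`(d + 1) * r ^ 2 = ∑ i, ⟪A i - G, A i - Q⟫ ≤ r * ∑ i, dist Q (A i)` for every point `Q`.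
-/

open Finset RealInnerProductSpace

namespace AffineBasis

variable {ι V P : Type*}

theorem coord_eq_zero_of_mem_affineSpan_image {k : Type*} [Ring k] [AddCommGroup V] [Module k V]
    [AddTorsor V P] (b : AffineBasis ι k P) {j : ι} {x : P}
    (hx : x ∈ affineSpan k (b '' {i | i ≠ j})) : b.coord j x = 0 := by
  obtain ⟨fs, w, hfs, hw, rfl⟩ := eq_affineCombination_of_mem_affineSpan_image hx
  exact b.coord_apply_combination_of_notMem (fun hj ↦ hfs hj rfl) hw

theorem dist_eq_abs_one_sub_coord_mul_dist [NormedAddCommGroup V] [NormedSpace ℝ V]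
    [MetricSpace P] [NormedAddTorsor V P] (b : AffineBasis ι ℝ P) {j : ι} {X Q : P}
    (hcol : Collinear ℝ {b j, X, Q}) (hQ : b.coord j Q = 0) :
    dist (b j) X = |1 - b.coord j X| * dist (b j) Q := by
  by_cases hX : b j = X
  · simp [← hX]
  obtain ⟨t, rfl⟩ := mem_affineSpan_pair_iff_exists_lineMap_eq.1 <|
    hcol.mem_affineSpan_of_mem_of_ne (p₃ := Q) (by simp) (by simp) (by simp) hX
  have ht : t * (1 - b.coord j X) = 1 := by
    rw [AffineMap.apply_lineMap, b.coord_apply_eq, AffineMap.lineMap_apply_ring'] at hQ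
    linear_combination -hQ
  rw [dist_left_lineMap, Real.norm_eq_abs, ← mul_assoc, ← abs_mul, mul_comm _ t, ht, abs_one,
    one_mul]

variable [Fintype ι]

theorem eq_centroid_of_coord_eq [AddCommGroup V] [Module ℝ V] [AddTorsor V P]
    (b : AffineBasis ι ℝ P) {x : P} (h : ∀ i j, b.coord i x = b.coord j x) :
    x = univ.centroid ℝ b := by
  refine b.ext_elem fun i ↦ ?_
  have hsum := b.sum_coord_apply_eq_one x
  rw [sum_congr rfl fun j _ ↦ h j i, sum_const, nsmul_eq_mul] at hsum
  rw [b.coord_apply_centroid (mem_univ i), eq_inv_of_mul_eq_one_right hsum]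

theorem eq_mul_coord_of_sum_smul_sub_eq_zero {k : Type*} [Ring k] [AddCommGroup V] [Module k V]
    (b : AffineBasis ι k V) {w : ι → k} {x : V} (h : ∑ i, w i • (x - b i) = 0) (i : ι) :
    w i = (∑ j, w j) * b.coord i x := by
  refine b.ind.eq_of_sum_eq_sum (w₂ := fun i ↦ (∑ j, w j) * b.coord i x) ?_ ?_ i (mem_univ i)
  · rw [← mul_sum, b.sum_coord_apply_eq_one, mul_one]
  · simp_rw [mul_smul, ← smul_sum, b.linear_combination_coord_eq_self]
    simp only [smul_sub, sum_sub_distrib, ← sum_smul] at h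
    exact (sub_eq_zero.1 h).symm

theorem coord_le_one_of_mem_convexHull [AddCommGroup V] [Module ℝ V] (b : AffineBasis ι ℝ V)
    {x : V} (hx : x ∈ convexHull ℝ (Set.range b)) (i : ι) : b.coord i x ≤ 1 := by
  rw [b.convexHull_eq_nonneg_coord] at hx
  exact b.sum_coord_apply_eq_one x ▸ single_le_sum (fun j _ ↦ hx j) (mem_univ i)

end AffineBasis

namespace Affine.Simplex

theorem faceOppositeCentroid_eq_centroid_erase {k V P : Type*} [DivisionRing k] [AddCommGroup V]
    [Module k V] [AddTorsor V P] {n : ℕ} [NeZero n] (s : Simplex k P n) (i : Fin (n + 1)) :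
    s.faceOppositeCentroid i = (univ.erase i).centroid k s.points := by
  rw [faceOppositeCentroid, faceOpposite, centroid, face_centroid_eq_centroid, compl_singleton]

variable {V P : Type*} [NormedAddCommGroup V] [InnerProductSpace ℝ V] [MetricSpace P]
  [NormedAddTorsor V P] {n : ℕ}

theorem mul_dist_point_faceOppositeCentroid [NeZero n] (s : Simplex ℝ P n)
    (i : Fin (n + 1)) :
    n * dist (s.points i) (s.faceOppositeCentroid i) = (n + 1) * dist (s.points i) s.centroid := by
  rw [s.dist_point_faceOppositeCentroid, s.dist_point_centroid]
  ring

theorem sum_dist_centroid_le_of_dist_eq (s : Simplex ℝ P n) {r : ℝ}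
    (hr : ∀ i, dist s.centroid (s.points i) = r) (Q : P) :
    ∑ i, dist s.centroid (s.points i) ≤ ∑ i, dist Q (s.points i) := by
  set G := s.centroid
  have hsum : ∑ i, dist G (s.points i) = (n + 1) * r := by simp [hr]
  have hinner : ∀ i, r ^ 2 + ⟪s.points i -ᵥ G, G -ᵥ Q⟫ ≤ r * dist Q (s.points i) := by
    intro i
    have hnorm : ‖s.points i -ᵥ G‖ = r := by rw [← dist_eq_norm_vsub, dist_comm, hr]
    calc r ^ 2 + ⟪s.points i -ᵥ G, G -ᵥ Q⟫
        = ⟪s.points i -ᵥ G, s.points i -ᵥ Q⟫ := by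
          rw [← vsub_add_vsub_cancel (s.points i) G Q, inner_add_right,
            real_inner_self_eq_norm_sq, hnorm]
      _ ≤ ‖s.points i -ᵥ G‖ * ‖s.points i -ᵥ Q‖ := real_inner_le_norm _ _
      _ = r * dist Q (s.points i) := by rw [hnorm, dist_comm, dist_eq_norm_vsub]
  have htotal : (n + 1) * r ^ 2 ≤ r * ∑ i, dist Q (s.points i) := by
    have h := sum_le_sum fun i (_ : i ∈ univ) ↦ hinner i
    rw [sum_add_distrib, ← sum_inner, s.centroid_weighted_vsub_eq_zero, inner_zero_left,
      add_zero, ← mul_sum] at h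
    simpa using h
  rcases (dist_nonneg.trans_eq (hr 0)).eq_or_lt with rfl | hrpos
  · simpa [hsum] using sum_nonneg fun i _ ↦ dist_nonneg
  · rw [hsum]
    nlinarith

end Affine.Simplex

section FermatPoint

variable {E : Type*} [NormedAddCommGroup E] [InnerProductSpace ℝ E]

theorem hasFDerivAt_norm_of_ne_zero {x : E} (hx : x ≠ 0) :
    HasFDerivAt (‖·‖) (‖x‖⁻¹ • innerSL ℝ x) x := by
  have hsq : ‖x‖ ^ 2 ≠ 0 := by positivity
  convert (hasStrictFDerivAt_norm_sq x).hasFDerivAt.sqrt hsq using 1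
  · ext y
    simp [Real.sqrt_sq (norm_nonneg y)]
  · rw [Real.sqrt_sq (norm_nonneg x)]
    module

theorem hasFDerivAt_dist_const_s18 {x a : E} (hx : x ≠ a) :
    HasFDerivAt (dist · a) (‖x - a‖⁻¹ • innerSL ℝ (x - a)) x := by
  have h := (hasFDerivAt_norm_of_ne_zero (sub_ne_zero.2 hx)).comp x
    ((hasFDerivAt_id x).sub_const a)
  rw [ContinuousLinearMap.comp_id] at h
  exact h.congr_of_eventuallyEq (.of_forall fun y ↦ dist_eq_norm y a)

variable {ι : Type*} [Fintype ι]

theorem sum_inv_norm_smul_sub_eq_zero_of_forall_sum_dist_le {A : ι → E} {F : E}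
    (hF : ∀ Q, ∑ i, dist F (A i) ≤ ∑ i, dist Q (A i)) (hne : ∀ i, F ≠ A i) :
    ∑ i, ‖F - A i‖⁻¹ • (F - A i) = 0 := by
  have hder : HasFDerivAt (fun Q ↦ ∑ i, dist Q (A i))
      (innerSL ℝ (∑ i, ‖F - A i‖⁻¹ • (F - A i))) F := by
    simpa only [map_sum, map_smul] using
      HasFDerivAt.fun_sum fun i _ ↦ hasFDerivAt_dist_const_s18 (hne i)
  have hmin : IsLocalMin (fun Q ↦ ∑ i, dist Q (A i)) F := .of_forall hF
  rw [← norm_eq_zero, ← innerSL_apply_norm ℝ, hmin.hasFDerivAt_eq_zero hder, norm_zero]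

theorem AffineBasis.exists_inv_dist_eq_mul_coord (b : AffineBasis ι ℝ E) {F : E}
    (hF : ∀ Q, ∑ i, dist F (b i) ≤ ∑ i, dist Q (b i)) (hne : ∀ i, F ≠ b i) :
    ∃ s, ∀ i, (dist F (b i))⁻¹ = s * b.coord i F := by
  refine ⟨_, b.eq_mul_coord_of_sum_smul_sub_eq_zero ?_⟩
  simpa only [dist_eq_norm] using sum_inv_norm_smul_sub_eq_zero_of_forall_sum_dist_le hF hne

end FermatPoint

theorem eq_of_mul_one_sub_eq_mul_one_sub {x y : ℝ} (h : x * (1 - x) = y * (1 - y))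
    (hxy : x + y ≠ 1) : x = y := by
  have hfactor : (x - y) * (1 - x - y) = 0 := by linear_combination h
  rcases mul_eq_zero.1 hfactor with h' | h'
  · linarith
  · exact absurd (by linarith) hxy

theorem Fin.exists_ne_and_ne (hd : 2 ≤ d) (i j : Fin (d + 1)) : ∃ k, k ≠ i ∧ k ≠ j := by
  obtain ⟨k, -, hk⟩ := exists_mem_notMem_of_card_lt_card (s := {i, j}) (t := univ) <| by
    rw [card_univ, Fintype.card_fin]
    exact card_le_two.trans_lt (by omega)
  simp only [mem_insert, mem_singleton, not_or] at hk
  exact ⟨k, hk⟩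

theorem isFermatPoint_ctr {A : Fin (d + 1) → Pt d} (hA : AffineIndependent ℝ A)
    (h : IsCircumcenter A (ctr A)) : IsFermatPoint A (ctr A) := by
  obtain ⟨r, hr⟩ := h
  exact (⟨A, hA⟩ : Affine.Simplex ℝ (Pt d) d).sum_dist_centroid_le_of_dist_eq hr

section Medians

variable [NeZero d] {A : Fin (d + 1) → Pt d}

theorem isCevianFoot_centroid_erase (hA : AffineIndependent ℝ A) (j : Fin (d + 1)) :
    IsCevianFoot A j (ctr A) ((univ.erase j).centroid ℝ A) := by
  let s : Affine.Simplex ℝ (Pt d) d := ⟨A, hA⟩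
  have hcol := s.collinear_point_centroid_faceOppositeCentroid (k := ℝ) j
  have hmem := s.faceOppositeCentroid_mem_affineSpan_face j
  rw [Affine.Simplex.range_faceOpposite_points] at hmem
  rw [s.faceOppositeCentroid_eq_centroid_erase] at hcol hmem
  exact ⟨hcol, hmem⟩

theorem dist_centroid_erase (hA : AffineIndependent ℝ A) (j : Fin (d + 1)) :
    dist (A j) ((univ.erase j).centroid ℝ A) = (d + 1) / d * dist (ctr A) (A j) := by
  let s : Affine.Simplex ℝ (Pt d) d := ⟨A, hA⟩
  have h : (d : ℝ) * dist (A j) (s.faceOppositeCentroid j) = (d + 1) * dist (A j) (ctr A) :=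
    s.mul_dist_point_faceOppositeCentroid j
  rw [s.faceOppositeCentroid_eq_centroid_erase] at h
  rw [dist_comm (ctr A), div_mul_eq_mul_div, eq_div_iff (NeZero.ne _), mul_comm, h]

theorem isCircumcenter_ctr_iff_dist_centroid_erase_eq (hA : AffineIndependent ℝ A) :
    IsCircumcenter A (ctr A) ↔ ∀ j k : Fin (d + 1),
      dist (A j) ((univ.erase j).centroid ℝ A) = dist (A k) ((univ.erase k).centroid ℝ A) := by
  have hfactor : ((d : ℝ) + 1) / d ≠ 0 := div_ne_zero (by positivity) (NeZero.ne _)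
  simp_rw [dist_centroid_erase hA, mul_right_inj' hfactor]
  constructor
  · rintro ⟨r, hr⟩ j k
    rw [hr, hr]
  · exact fun h ↦ ⟨_, fun i ↦ h i 0⟩

theorem equalCevians_ctr (hA : AffineIndependent ℝ A) (h : IsCircumcenter A (ctr A)) :
    EqualCevians A (ctr A) := by
  obtain ⟨r, hr⟩ := h
  exact ⟨(d + 1) / d * r, fun j ↦
    ⟨_, isCevianFoot_centroid_erase hA j, by rw [dist_centroid_erase hA, hr]⟩⟩

end Medians

section Barycentric

variable {b : AffineBasis (Fin (d + 1)) ℝ (Pt d)}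

theorem EqualCevians.exists_dist_eq {X : Pt d} (h : EqualCevians b X) :
    ∃ L, ∀ j, dist X (b j) = |1 - b.coord j X| * L := by
  obtain ⟨L, hL⟩ := h
  refine ⟨L, fun j ↦ ?_⟩
  obtain ⟨Q, ⟨hcol, hQ⟩, rfl⟩ := hL j
  rw [dist_comm]
  exact b.dist_eq_abs_one_sub_coord_mul_dist hcol (b.coord_eq_zero_of_mem_affineSpan_image hQ)

theorem isCircumcenter_ctr_of_equalCevians {X : Pt d} (hcev : EqualCevians b X)
    (h : ∀ i j, b.coord i X = b.coord j X) : IsCircumcenter b (ctr b) := by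
  obtain rfl : X = ctr b := b.eq_centroid_of_coord_eq h
  obtain ⟨L, hL⟩ := hcev.exists_dist_eq
  exact ⟨|1 - b.coord 0 (ctr b)| * L, fun i ↦ by rw [hL i, h i 0]⟩

theorem coord_eq_of_isCircumcenter_of_equalCevians {C : Pt d} (hC : IsCircumcenter b C)
    (hhull : C ∈ convexHull ℝ (Set.range b)) (hcev : EqualCevians b C) (i j : Fin (d + 1)) :
    b.coord i C = b.coord j C := by
  obtain ⟨r, hr⟩ := hC
  obtain ⟨L, hL⟩ := hcev.exists_dist_eq
  rcases eq_or_ne i j with rfl | hij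
  · rfl
  have hr0 : r ≠ 0 := by
    rintro rfl
    exact hij (b.ind.injective ((dist_eq_zero.1 (hr i)).symm.trans (dist_eq_zero.1 (hr j))))
  have hradius : ∀ i, r = (1 - b.coord i C) * L := fun i ↦ by
    rw [← hr i, hL i, abs_of_nonneg (sub_nonneg.2 (b.coord_le_one_of_mem_convexHull hhull i))]
  have hL0 : L ≠ 0 := by
    rintro rfl
    exact hr0 (by simpa using hradius i)
  linarith [mul_right_cancel₀ hL0 ((hradius i).symm.trans (hradius j))]

theorem coord_eq_of_isFermatPoint_of_equalCevians (hd : 2 ≤ d) {F : Pt d}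
    (hF : IsFermatPoint b F) (hint : F ∈ interior (convexHull ℝ (Set.range b)))
    (hcev : EqualCevians b F) (i j : Fin (d + 1)) : b.coord i F = b.coord j F := by
  rw [b.interior_convexHull] at hint
  have hne : ∀ i, F ≠ b i := by
    rintro i rfl
    obtain ⟨k, hk, -⟩ := Fin.exists_ne_and_ne hd i i
    exact (hint k).ne' (b.coord_apply_ne hk)
  obtain ⟨s, hs⟩ := b.exists_inv_dist_eq_mul_coord hF hne
  obtain ⟨L, hL⟩ := hcev.exists_dist_eq
  have hprod : ∀ i, b.coord i F < 1 → s * L * (b.coord i F * (1 - b.coord i F)) = 1 := by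
    intro i hi
    have h := inv_mul_cancel₀ (dist_pos.2 (hne i)).ne'
    rw [hs i, hL i, abs_of_pos (sub_pos.2 hi)] at h
    linear_combination h
  rcases eq_or_ne i j with rfl | hij
  · rfl
  obtain ⟨k, hki, hkj⟩ := Fin.exists_ne_and_ne hd i j
  have hlt : b.coord i F + b.coord j F < 1 := by
    rw [← sum_pair hij (f := fun l ↦ b.coord l F), ← b.sum_coord_apply_eq_one F]
    exact sum_lt_sum_of_subset (subset_univ _) (mem_univ k) (by simp [hki, hkj]) (hint k)
      fun l _ _ ↦ (hint l).le
  have hi := hprod i (by linarith [hint j])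
  have hj := hprod j (by linarith [hint i])
  exact eq_of_mul_one_sub_eq_mul_one_sub
    (mul_left_cancel₀ (left_ne_zero_of_mul_eq_one hi) (hi.trans hj.symm)) hlt.ne

end Barycentric

/-- Theorem 5.1. For a `d`-simplex `S = [A 0, …, A d]` the
following are equivalent: (1) the centroid and the circumcenter coincide;
(2) the `d+1` medians (the cevians through the centroid, from each vertex to
the centroid of the opposite facet) have equal lengths; (3) the cevians
through the Fermat-Torricelli point (which lies in the interior of `S`) have
equal lengths; (4) the circumcenter lies in `S` and the cevians through it
have equal lengths. -/
theorem statement18 (d : ℕ) (hd : 2 ≤ d)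
    (A : Fin (d+1) → Pt d) (hA : AffineIndependent ℝ A) :
    [ IsCircumcenter A (ctr A),
      ∀ j k : Fin (d+1),
        dist (A j) (Finset.centroid ℝ (Finset.univ.erase j) A) =
          dist (A k) (Finset.centroid ℝ (Finset.univ.erase k) A),
      ∃ F : Pt d, IsFermatPoint A F ∧ F ∈ interior (convexHull ℝ (Set.range A)) ∧
        EqualCevians A F,
      ∃ C : Pt d, IsCircumcenter A C ∧ C ∈ convexHull ℝ (Set.range A) ∧
        EqualCevians A C ].TFAE := by
  have : NeZero d := ⟨by omega⟩
  obtain ⟨b, rfl⟩ : ∃ b : AffineBasis (Fin (d + 1)) ℝ (Pt d), ⇑b = A :=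
    ⟨⟨A, hA, hA.affineSpan_eq_top_iff_card_eq_finrank_add_one.2 (by simp)⟩, rfl⟩
  have hG : ctr b ∈ interior (convexHull ℝ (Set.range b)) := b.centroid_mem_interior_convexHull
  tfae_have 1 ↔ 2 := isCircumcenter_ctr_iff_dist_centroid_erase_eq hA
  tfae_have 1 → 3 := fun h ↦ ⟨ctr b, isFermatPoint_ctr hA h, hG, equalCevians_ctr hA h⟩
  tfae_have 3 → 1 := fun ⟨F, hF, hint, hcev⟩ ↦ isCircumcenter_ctr_of_equalCevians hcev
    (coord_eq_of_isFermatPoint_of_equalCevians hd hF hint hcev)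
  tfae_have 1 → 4 := fun h ↦ ⟨ctr b, h, interior_subset hG, equalCevians_ctr hA h⟩
  tfae_have 4 → 1 := fun ⟨C, hC, hhull, hcev⟩ ↦ isCircumcenter_ctr_of_equalCevians hcev
    (coord_eq_of_isCircumcenter_of_equalCevians hC hhull hcev)
  tfae_finish
end
end
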